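/- arXiv:1607.04149 — 9 statements merged into one kernel-verified Lean document; each statement's English description precedes it below -/
import Mathlib

section
/- Consider a sequence of bid profiles b^0, ..., b^n over n bidders and m items, where in step i bidder i changes only his own bids (all other bidders' bids are unchanged from b^{i-1} to b^i) and all bids are nonnegative. Suppose in step i bidder i wins a set S' of items, meaning b^i_{i,j} >= b^i_{k,j} for all k ≠ i and j in S'. Define bidder i's declared utility u_i^D(b^i) = sum over j in S' of (b^i_{i,j} - max_{k ≠ i} b^i_{k,j}). Then sum over i = 1..n of u_i^D(b^i) <= sum over j of max_k b^n_{k,j}. -/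
open Finset

/-- Maximum bid on item `j` among bidders other than `i` (bids assumed nonnegative). -/
noncomputable def maxOther {n m : ℕ} (b : Fin n → Fin m → ℝ) (i : Fin n) (j : Fin m) : ℝ :=
  (((Finset.univ.erase i).sup fun k => Real.toNNReal (b k j)) : NNReal)

/-- Declared welfare: sum over items of the highest bid. -/
noncomputable def DW {n m : ℕ} (b : Fin n → Fin m → ℝ) : ℝ :=
  ∑ j, ((Finset.univ.sup fun k => Real.toNNReal (b k j) : NNReal) : ℝ)

/-- In a sequence `b^0, …, b^n` in which bidder `i` changes only his own bids at step `i`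
and wins the set `S i` at the profile `b^i`, the sum of declared utilities
`∑ i, u_i^D(b^i)` is at most the declared welfare of the final profile `b^n`. -/
theorem stmt0 (n m : ℕ) (b : Fin (n + 1) → Fin n → Fin m → ℝ)
    (hnonneg : ∀ t i j, 0 ≤ b t i j)
    (hupd : ∀ (i : Fin n) (k : Fin n), k ≠ i → ∀ j, b i.castSucc k j = b i.succ k j)
    (S : Fin n → Finset (Fin m))
    (hwin : ∀ i : Fin n, ∀ j ∈ S i, ∀ k : Fin n, k ≠ i → b i.succ k j ≤ b i.succ i j) :
    ∑ i : Fin n, ∑ j ∈ S i, (b i.succ i j - maxOther (b i.succ) i j)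
      ≤ DW (b (Fin.last n)) := by
  -- bidder k's bids are fixed from step k.succ on
  have hfix : ∀ (k : Fin n) (j : Fin m) (t : Fin (n+1)), (k : ℕ) < (t : ℕ) →
      b t k j = b k.succ k j := by
    intro k j
    refine Fin.induction ?_ ?_
    · intro h; simp at h
    · intro t ih h
      have h' : (k : ℕ) < (t : ℕ) + 1 := by simpa using h
      rcases Nat.lt_succ_iff_lt_or_eq.mp h' with h'' | h''
      · have hk : k ≠ t := by
          intro e; subst e; omega
        rw [← hupd t k hk, ih (by simpa using h'')]
      · have : k = t := Fin.ext h''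
        subst this; rfl
  have hfinal : ∀ (k : Fin n) (j : Fin m) (t : Fin (n+1)), (k : ℕ) < (t : ℕ) →
      b t k j = b (Fin.last n) k j := by
    intro k j t ht
    rw [hfix k j t ht, hfix k j (Fin.last n) (by simp [Fin.val_last, k.isLt])]
  set g : ℕ → Fin m → NNReal := fun t j =>
    (Finset.univ.filter fun k : Fin n => (k : ℕ) < t).sup
      fun k => Real.toNNReal (b (Fin.last n) k j) with hg
  set Φ : ℕ → ℝ := fun t => ∑ j, (g t j : ℝ) with hΦ
  have gmono : ∀ t j, g t j ≤ g (t+1) j := by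
    intro t j
    refine Finset.sup_mono ?_
    intro k hk
    simp only [Finset.mem_filter, Finset.mem_univ, true_and] at hk ⊢
    omega
  have key : ∀ i : Fin n,
      ∑ j ∈ S i, (b i.succ i j - maxOther (b i.succ) i j) ≤ Φ ((i : ℕ) + 1) - Φ i := by
    intro i
    have step1 : ∑ j ∈ S i, (b i.succ i j - maxOther (b i.succ) i j)
        ≤ ∑ j ∈ S i, (((g ((i : ℕ)+1) j : ℝ)) - (g i j : ℝ)) := by
      refine Finset.sum_le_sum ?_
      intro j hj
      have h1 : b i.succ i j ≤ (g ((i : ℕ)+1) j : ℝ) := by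
        have hmem : i ∈ Finset.univ.filter fun k : Fin n => (k : ℕ) < (i : ℕ) + 1 := by
          simp
        have hle : Real.toNNReal (b (Fin.last n) i j)
            ≤ g ((i : ℕ)+1) j :=
          Finset.le_sup (f := fun k => Real.toNNReal (b (Fin.last n) k j)) hmem
        have := NNReal.coe_le_coe.mpr hle
        calc b i.succ i j = b (Fin.last n) i j := hfinal i j i.succ (by simp)
          _ ≤ (Real.toNNReal (b (Fin.last n) i j) : ℝ) := Real.le_coe_toNNReal _
          _ ≤ _ := this
      have h2 : (g i j : ℝ) ≤ maxOther (b i.succ) i j := by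
        unfold maxOther
        refine NNReal.coe_le_coe.mpr ?_
        refine Finset.sup_le ?_
        intro k hk
        simp only [Finset.mem_filter, Finset.mem_univ, true_and] at hk
        have hki : k ≠ i := by intro e; subst e; omega
        have : b (Fin.last n) k j = b i.succ k j := by
          rw [hfinal k j i.succ (by simp; omega)]
        rw [this]
        exact Finset.le_sup (f := fun k => Real.toNNReal (b i.succ k j))
          (Finset.mem_erase.mpr ⟨hki, Finset.mem_univ k⟩)
      exact sub_le_sub h1 h2
    have step2 : ∑ j ∈ S i, (((g ((i : ℕ)+1) j : ℝ)) - (g i j : ℝ))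
        ≤ ∑ j : Fin m, (((g ((i : ℕ)+1) j : ℝ)) - (g i j : ℝ)) := by
      refine Finset.sum_le_sum_of_subset_of_nonneg (Finset.subset_univ _) ?_
      intro j _ _
      exact sub_nonneg.mpr (NNReal.coe_le_coe.mpr (gmono _ j))
    have step3 : ∑ j : Fin m, (((g ((i : ℕ)+1) j : ℝ)) - (g i j : ℝ))
        = Φ ((i : ℕ)+1) - Φ i := by
      simp [hΦ, Finset.sum_sub_distrib]
    linarith
  have tele : ∑ i : Fin n, (Φ ((i : ℕ) + 1) - Φ i) = Φ n - Φ 0 := by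
    rw [Fin.sum_univ_eq_sum_range (fun i => Φ (i + 1) - Φ i)]
    exact Finset.sum_range_sub Φ n
  have hΦ0 : Φ 0 = 0 := by
    simp [hΦ, hg]
  have hΦn : Φ n = DW (b (Fin.last n)) := by
    unfold DW
    refine Finset.sum_congr rfl ?_
    intro j _
    have : (Finset.univ.filter fun k : Fin n => (k : ℕ) < n) = Finset.univ :=
      Finset.filter_true_of_mem (fun k _ => k.isLt)
    simp only [hg, this]
  calc ∑ i : Fin n, ∑ j ∈ S i, (b i.succ i j - maxOther (b i.succ) i j)
      ≤ ∑ i : Fin n, (Φ ((i : ℕ) + 1) - Φ i) := Finset.sum_le_sum (fun i _ => key i)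
    _ = Φ n - Φ 0 := tele
    _ = DW (b (Fin.last n)) := by rw [hΦ0, hΦn]; ring
end

section
/- Let S*_1, ..., S*_n be a partition of the m items among n bidders with valuations v_i : 2^M → R_{≥0}. Consider a sequence of nonnegative bid profiles b^0, ..., b^n where in step i bidder i updates his bid using an α-aggressive bid (0 < α ≤ 1): that is, the declared utility u_i^D(b^i) of bidder i at b^i is at least α times the maximum possible utility max_S (v_i(S) - sum_{j in S} max_{k ≠ i} b^i_{k,j}). Then (α + 1)·DW(b^n) + α·DW(b^0) ≥ α·sum_i v_i(S*_i), where DW(b) = sum_j max_k b_{k,j}. -/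
open Finset

/-- Key lemma: if in a sequence `b^0, …, b^n` bidder `i` updates his bid at step `i` with
an `α`-aggressive bid (his declared utility at `b^i` is at least `α` times the utility of
any set at the prices of `b^i`), winning the set `S i` at profile `b^i`, then
`(α+1)·DW(b^n) + α·DW(b^0) ≥ α · ∑ i, v_i(S*_i)` for any partition `S*` of the items. -/
theorem stmt1 (n m : ℕ) (α : ℝ) (hα : 0 < α) (hα1 : α ≤ 1)
    (v : Fin n → Finset (Fin m) → ℝ) (hv : ∀ i S, 0 ≤ v i S)
    (Sstar : Fin n → Finset (Fin m))
    (hpart : ∀ j : Fin m, ∃! i : Fin n, j ∈ Sstar i)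
    (b : Fin (n + 1) → Fin n → Fin m → ℝ)
    (hnonneg : ∀ t i j, 0 ≤ b t i j)
    (hupd : ∀ (i : Fin n) (k : Fin n), k ≠ i → ∀ j, b i.castSucc k j = b i.succ k j)
    (S : Fin n → Finset (Fin m))
    (hwin : ∀ i : Fin n, ∀ j ∈ S i, ∀ k : Fin n, k ≠ i → b i.succ k j ≤ b i.succ i j)
    (haggr : ∀ i : Fin n, ∀ T : Finset (Fin m),
      α * (v i T - ∑ j ∈ T, maxOther (b i.succ) i j)
        ≤ ∑ j ∈ S i, (b i.succ i j - maxOther (b i.succ) i j)) :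
    α * ∑ i, v i (Sstar i) ≤ (α + 1) * DW (b (Fin.last n)) + α * DW (b 0) := by
  set L := Fin.last n with hLdef
  -- bid stability
  have hafter : ∀ (k : Fin n) (j : Fin m) (t : ℕ) (ht : t < n + 1),
      (k : ℕ) < t → b ⟨t, ht⟩ k j = b k.succ k j := by
    intro k j t
    induction t with
    | zero => intro ht h; omega
    | succ s ih =>
      intro ht hlt
      have hs : s < n := by omega
      rcases eq_or_ne s (k : ℕ) with h | h
      · have he : (⟨s + 1, ht⟩ : Fin (n+1)) = k.succ := by
          ext; simp [h]
        rw [he]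
      · have hk : k ≠ (⟨s, hs⟩ : Fin n) :=
          by
          intro hEq
          have := congrArg Fin.val hEq
          simp only [Fin.val_mk] at this
          omega
        have hstep := hupd ⟨s, hs⟩ k hk j
        have h1 : (⟨s + 1, ht⟩ : Fin (n+1)) = (⟨s, hs⟩ : Fin n).succ := rfl
        have h2 : ((⟨s, hs⟩ : Fin n).castSucc : Fin (n+1)) = ⟨s, by omega⟩ := rfl
        rw [h1, ← hstep, h2]
        exact ih (by omega) (by omega)
  have hbefore : ∀ (k : Fin n) (j : Fin m) (t : ℕ) (ht : t < n + 1),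
      t ≤ (k : ℕ) → b ⟨t, ht⟩ k j = b 0 k j := by
    intro k j t
    induction t with
    | zero =>
      intro ht h
      congr 1
    | succ s ih =>
      intro ht hle
      have hs : s < n := by omega
      have hk : k ≠ (⟨s, hs⟩ : Fin n) :=
        by
          intro hEq
          have := congrArg Fin.val hEq
          simp only [Fin.val_mk] at this
          omega
      have hstep := hupd ⟨s, hs⟩ k hk j
      have h1 : (⟨s + 1, ht⟩ : Fin (n+1)) = (⟨s, hs⟩ : Fin n).succ := rfl
      have h2 : ((⟨s, hs⟩ : Fin n).castSucc : Fin (n+1)) = ⟨s, by omega⟩ := rfl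
      rw [h1, ← hstep, h2]
      exact ih (by omega) (by omega)
  have hfin : ∀ (k : Fin n) (j : Fin m), b L k j = b k.succ k j := by
    intro k j
    have hLe : L = (⟨n, Nat.lt_succ_self n⟩ : Fin (n+1)) := rfl
    rw [hLe]
    exact hafter k j n (Nat.lt_succ_self n) k.isLt
  have hsucc : ∀ (i k : Fin n) (j : Fin m), (k : ℕ) < (i : ℕ) → b i.succ k j = b L k j := by
    intro i k j h
    have h1 : (i.succ : Fin (n+1)) = ⟨(i : ℕ) + 1, by omega⟩ := rfl
    rw [h1, hafter k j _ _ (by omega), ← hfin]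
  have hsucc0 : ∀ (i k : Fin n) (j : Fin m), (i : ℕ) < (k : ℕ) → b i.succ k j = b 0 k j := by
    intro i k j h
    have h1 : (i.succ : Fin (n+1)) = ⟨(i : ℕ) + 1, by omega⟩ := rfl
    rw [h1]
    exact hbefore k j _ _ (by omega)
  have hown : ∀ (i : Fin n) (j : Fin m), b i.succ i j = b L i j :=
    fun i j => (hfin i j).symm
  -- welfare summands
  set Fn : Fin m → NNReal := fun j => univ.sup fun k => (b L k j).toNNReal with hFn
  set F0 : Fin m → NNReal := fun j => univ.sup fun k => (b 0 k j).toNNReal with hF0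
  have hDWL : DW (b L) = ∑ j, ((Fn j : NNReal) : ℝ) := rfl
  have hDW0 : DW (b 0) = ∑ j, ((F0 j : NNReal) : ℝ) := rfl
  -- price bound
  have hP : ∀ (i : Fin n) (j : Fin m),
      maxOther (b i.succ) i j ≤ (Fn j : ℝ) + (F0 j : ℝ) := by
    intro i j
    have h1 : ((univ.erase i).sup fun k => (b i.succ k j).toNNReal) ≤ Fn j + F0 j := by
      apply Finset.sup_le
      intro k hk
      have hki : k ≠ i := (Finset.mem_erase.mp hk).1
      have hki' : (k : ℕ) ≠ (i : ℕ) := fun h => hki (Fin.ext h)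
      rcases lt_or_gt_of_ne hki' with h | h
      · rw [hsucc i k j h]
        calc (b L k j).toNNReal ≤ Fn j := Finset.le_sup (f := fun k => (b L k j).toNNReal) (Finset.mem_univ k)
          _ ≤ Fn j + F0 j := le_self_add
      · rw [hsucc0 i k j h]
        calc (b 0 k j).toNNReal ≤ F0 j := Finset.le_sup (f := fun k => (b 0 k j).toNNReal) (Finset.mem_univ k)
          _ ≤ Fn j + F0 j := le_add_self
    have := NNReal.coe_le_coe.mpr h1
    simpa [maxOther] using this
  -- declared utility sum bound (telescoping)
  have hUD : (∑ i, ∑ j ∈ S i, (b i.succ i j - maxOther (b i.succ) i j)) ≤ DW (b L) := by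
    have hswap : (∑ i, ∑ j ∈ S i, (b i.succ i j - maxOther (b i.succ) i j))
        = ∑ j, ∑ i, (if j ∈ S i then b i.succ i j - maxOther (b i.succ) i j else 0) := by
      rw [Finset.sum_comm]
      apply Finset.sum_congr rfl
      intro i _
      rw [Finset.sum_ite_mem, Finset.univ_inter]
    rw [hswap, hDWL]
    apply Finset.sum_le_sum
    intro j _
    set g : ℕ → ℝ := fun t =>
      (((univ.filter fun k : Fin n => (k : ℕ) < t).sup fun k => (b L k j).toNNReal : NNReal) : ℝ)
      with hg
    have hg0 : g 0 = 0 := by simp [hg]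
    have hgmono : ∀ s t : ℕ, s ≤ t → g s ≤ g t := by
      intro s t hst
      simp only [hg]
      apply NNReal.coe_le_coe.mpr
      apply Finset.sup_mono
      intro k hk
      simp only [Finset.mem_filter] at hk ⊢
      exact ⟨hk.1, lt_of_lt_of_le hk.2 hst⟩
    have hgn : g n = (Fn j : ℝ) := by
      have : (univ.filter fun k : Fin n => (k : ℕ) < n) = univ := by
        apply Finset.filter_true_of_mem
        intro k _
        exact k.isLt
      simp [hg, this, hFn]
    have hterm : ∀ i : Fin n,
        (if j ∈ S i then b i.succ i j - maxOther (b i.succ) i j else 0)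
          ≤ g ((i : ℕ) + 1) - g (i : ℕ) := by
      intro i
      split
      · -- winning case
        have hb : b i.succ i j ≤ g ((i : ℕ) + 1) := by
          rw [hown i j]
          have h2 : (b L i j).toNNReal
              ≤ (univ.filter fun k : Fin n => (k : ℕ) < (i : ℕ) + 1).sup
                  (fun k => (b L k j).toNNReal) :=
            Finset.le_sup (f := fun k => (b L k j).toNNReal)
              (by simp [Finset.mem_filter])
          calc b L i j = ((b L i j).toNNReal : ℝ) :=
                (Real.coe_toNNReal _ (hnonneg _ _ _)).symm
            _ ≤ g ((i : ℕ) + 1) := NNReal.coe_le_coe.mpr h2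
        have hm : g (i : ℕ) ≤ maxOther (b i.succ) i j := by
          have h1 : ((univ.filter fun k : Fin n => (k : ℕ) < (i : ℕ)).sup
                fun k => (b L k j).toNNReal)
              ≤ ((univ.erase i).sup fun k => (b i.succ k j).toNNReal) := by
            apply Finset.sup_le
            intro k hk
            simp only [Finset.mem_filter] at hk
            have hki : k ≠ i := by
              intro h; rw [h] at hk; exact lt_irrefl _ hk.2
            rw [← hsucc i k j hk.2]
            exact Finset.le_sup (f := fun k => (b i.succ k j).toNNReal) (Finset.mem_erase.mpr ⟨hki, Finset.mem_univ k⟩)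
          have := NNReal.coe_le_coe.mpr h1
          simpa [maxOther, hg] using this
        linarith
      · have := hgmono (i : ℕ) ((i : ℕ) + 1) (Nat.le_succ _)
        linarith
    calc (∑ i : Fin n, (if j ∈ S i then b i.succ i j - maxOther (b i.succ) i j else 0))
        ≤ ∑ i : Fin n, (g ((i : ℕ) + 1) - g (i : ℕ)) :=
          Finset.sum_le_sum (fun i _ => hterm i)
      _ = ∑ t ∈ Finset.range n, (g (t + 1) - g t) :=
          Fin.sum_univ_eq_sum_range (fun t => g (t + 1) - g t) n
      _ = g n - g 0 := Finset.sum_range_sub g n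
      _ = (Fn j : ℝ) := by rw [hgn, hg0]; ring
  -- partition sum
  have hpartsum : (∑ i, ∑ j ∈ Sstar i, ((Fn j : ℝ) + (F0 j : ℝ)))
      = DW (b L) + DW (b 0) := by
    have h1 : (∑ i, ∑ j ∈ Sstar i, ((Fn j : ℝ) + (F0 j : ℝ)))
        = ∑ j, ((Fn j : ℝ) + (F0 j : ℝ)) := by
      have h2 : ∀ i : Fin n, (∑ j ∈ Sstar i, ((Fn j : ℝ) + (F0 j : ℝ)))
          = ∑ j, (if j ∈ Sstar i then (Fn j : ℝ) + (F0 j : ℝ) else 0) := by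
        intro i
        rw [Finset.sum_ite_mem, Finset.univ_inter]
      simp_rw [h2]
      rw [Finset.sum_comm]
      apply Finset.sum_congr rfl
      intro j _
      obtain ⟨i0, hi0, huniq⟩ := hpart j
      rw [Finset.sum_eq_single i0]
      · simp [hi0]
      · intro k _ hk
        have : j ∉ Sstar k := fun h => hk (huniq k h)
        simp [this]
      · intro h; exact absurd (Finset.mem_univ i0) h
    rw [h1, hDWL, hDW0, ← Finset.sum_add_distrib]
  -- assemble
  have hmain : α * ∑ i, v i (Sstar i) ≤
      (∑ i, ∑ j ∈ S i, (b i.succ i j - maxOther (b i.succ) i j))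
      + α * ∑ i, ∑ j ∈ Sstar i, maxOther (b i.succ) i j := by
    rw [Finset.mul_sum, Finset.mul_sum, ← Finset.sum_add_distrib]
    apply Finset.sum_le_sum
    intro i _
    have h := haggr i (Sstar i)
    nlinarith [h]
  have hPsum : (∑ i, ∑ j ∈ Sstar i, maxOther (b i.succ) i j) ≤ DW (b L) + DW (b 0) := by
    calc (∑ i, ∑ j ∈ Sstar i, maxOther (b i.succ) i j)
        ≤ ∑ i, ∑ j ∈ Sstar i, ((Fn j : ℝ) + (F0 j : ℝ)) :=
          Finset.sum_le_sum (fun i _ => Finset.sum_le_sum (fun j _ => hP i j))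
      _ = DW (b L) + DW (b 0) := hpartsum
  have hfinal := mul_le_mul_of_nonneg_left hPsum hα.le
  linarith
end

section
/- Consider a β-safe sequence of bid profiles b^0, ..., b^n (β ≥ 1) in which at step i bidder i updates his bid to an α-aggressive bid (0 < α ≤ 1). Then DW(b^n) ≥ (α/β)·DW(b^0). -/
open Finset

/-- coe of a `Finset.sup` of `NNReal`s is at least each member. -/
lemma coe_le_sup' {ι : Type*} (s : Finset ι) (f : ι → NNReal) {a : ι} (ha : a ∈ s) :
    (f a : ℝ) ≤ ((s.sup f : NNReal) : ℝ) := NNReal.coe_le_coe.2 (Finset.le_sup ha)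

/-- coe of a `Finset.sup` of `NNReal`s is bounded by any nonnegative upper bound. -/
lemma sup_coe_le' {ι : Type*} (s : Finset ι) (f : ι → NNReal) {x : ℝ} (hx : 0 ≤ x)
    (h : ∀ a ∈ s, (f a : ℝ) ≤ x) : ((s.sup f : NNReal) : ℝ) ≤ x := by
  have h1 : s.sup f ≤ Real.toNNReal x :=
    Finset.sup_le fun a ha => (Real.le_toNNReal_iff_coe_le hx).2 (h a ha)
  calc ((s.sup f : NNReal) : ℝ) ≤ ((Real.toNNReal x : NNReal) : ℝ) := NNReal.coe_le_coe.2 h1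
    _ = x := Real.coe_toNNReal x hx

/-- The per-item maximum bid, as a real number. -/
noncomputable def Msup {n m : ℕ} (b : Fin n → Fin m → ℝ) (j : Fin m) : ℝ :=
  ((Finset.univ.sup fun k => Real.toNNReal (b k j) : NNReal) : ℝ)

lemma DW_eq_sum_Msup {n m : ℕ} (b : Fin n → Fin m → ℝ) : DW b = ∑ j, Msup b j := rfl

/-- In a `β`-safe sequence `b^0, …, b^n` in which at step `i` bidder `i` updates his bid to an
`α`-aggressive bid, the final declared welfare satisfies `DW(b^n) ≥ (α/β)·DW(b^0)`. -/
theorem stmt2 (n m : ℕ) (α β : ℝ) (hα : 0 < α) (hα1 : α ≤ 1) (hβ : 1 ≤ β)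
    (v : Fin n → Finset (Fin m) → ℝ) (hv : ∀ i S, 0 ≤ v i S)
    (b : Fin (n + 1) → Fin n → Fin m → ℝ)
    (hnonneg : ∀ t i j, 0 ≤ b t i j)
    -- at step `i` only bidder `i` changes his bid
    (hupd : ∀ (i : Fin n) (k : Fin n), k ≠ i → ∀ j, b i.castSucc k j = b i.succ k j)
    -- `T t i` is the set of items won by bidder `i` at profile `b^t`
    (T : Fin (n + 1) → Fin n → Finset (Fin m))
    (hpart : ∀ t, ∀ j : Fin m, ∃! i : Fin n, j ∈ T t i)
    (hwin : ∀ t, ∀ i : Fin n, ∀ j ∈ T t i, ∀ k : Fin n, b t k j ≤ b t i j)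
    -- β-safety: declared utility is at most β times actual utility, at every step
    (hsafe : ∀ t, ∀ i : Fin n,
      ∑ j ∈ T t i, (b t i j - maxOther (b t) i j)
        ≤ β * (v i (T t i) - ∑ j ∈ T t i, maxOther (b t) i j))
    -- α-aggressiveness of bidder `i`'s update at step `i`
    (haggr : ∀ i : Fin n, ∀ S : Finset (Fin m),
      α * (v i S - ∑ j ∈ S, maxOther (b i.succ) i j)
        ≤ ∑ j ∈ T i.succ i, (b i.succ i j - maxOther (b i.succ) i j)) :
    (α / β) * DW (b 0) ≤ DW (b (Fin.last n)) := by
  have hβ0 : (0:ℝ) < β := lt_of_lt_of_le one_pos hβ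
  -- notation for the declared utility
  set uD : Fin (n+1) → Fin n → ℝ :=
    fun t i => ∑ j ∈ T t i, (b t i j - maxOther (b t) i j) with huD
  -- basic facts about maxOther and Msup
  have hmo_nonneg : ∀ t (i : Fin n) j, 0 ≤ maxOther (b t) i j :=
    fun t i j => NNReal.coe_nonneg _
  have hmo_le : ∀ t (i : Fin n) j (k : Fin n), k ≠ i → b t k j ≤ maxOther (b t) i j := by
    intro t i j k hk
    have h1 : b t k j = ((Real.toNNReal (b t k j) : NNReal) : ℝ) :=
      (Real.coe_toNNReal _ (hnonneg t k j)).symm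
    rw [h1]
    exact coe_le_sup' (Finset.univ.erase i) (fun k => Real.toNNReal (b t k j))
      (Finset.mem_erase.2 ⟨hk, Finset.mem_univ k⟩)
  have hM_win : ∀ t (i : Fin n), ∀ j ∈ T t i, Msup (b t) j = b t i j := by
    intro t i j hj
    apply le_antisymm
    · apply sup_coe_le' _ _ (hnonneg t i j)
      intro k _
      rw [Real.coe_toNNReal _ (hnonneg t k j)]
      exact hwin t i j hj k
    · have h2 := coe_le_sup' Finset.univ (fun k => Real.toNNReal (b t k j)) (Finset.mem_univ i)
      rw [Real.coe_toNNReal _ (hnonneg t i j)] at h2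
      exact h2
  have hM_lose : ∀ t (i : Fin n) j, j ∉ T t i → Msup (b t) j = maxOther (b t) i j := by
    intro t i j hj
    obtain ⟨i', hi', _⟩ := hpart t j
    have hne : i' ≠ i := fun e => hj (e ▸ hi')
    apply le_antisymm
    · apply sup_coe_le' _ _ (hmo_nonneg t i j)
      intro k _
      rw [Real.coe_toNNReal _ (hnonneg t k j)]
      calc b t k j ≤ b t i' j := hwin t i' j hi' k
        _ ≤ maxOther (b t) i j := hmo_le t i j i' hne
    · exact NNReal.coe_le_coe.2 (Finset.sup_mono (Finset.erase_subset _ _))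
  -- the key accounting identity: DW = declared utility of i + sum of maxOther over all items
  have hId : ∀ t (i : Fin n), DW (b t) = uD t i + ∑ j, maxOther (b t) i j := by
    intro t i
    have hpt : ∀ j : Fin m, Msup (b t) j =
        (if j ∈ T t i then b t i j - maxOther (b t) i j else 0) + maxOther (b t) i j := by
      intro j
      by_cases hj : j ∈ T t i
      · simp [hj, hM_win t i j hj]
      · simp [hj, hM_lose t i j hj]
    rw [DW_eq_sum_Msup, Finset.sum_congr rfl (fun j _ => hpt j), Finset.sum_add_distrib]
    congr 1
    rw [Finset.sum_ite_mem, Finset.univ_inter]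
  -- nonnegativity of declared utilities (winner's bid dominates)
  have huD_nonneg : ∀ t (i : Fin n), 0 ≤ uD t i := by
    intro t i
    apply Finset.sum_nonneg
    intro j hj
    have h1 : maxOther (b t) i j ≤ b t i j := by
      apply sup_coe_le' _ _ (hnonneg t i j)
      intro k _
      rw [Real.coe_toNNReal _ (hnonneg t k j)]
      exact hwin t i j hj k
    linarith
  -- maxOther of i doesn't change at step i
  have hmo_eq : ∀ (i : Fin n) j, maxOther (b i.castSucc) i j = maxOther (b i.succ) i j := by
    intro i j
    unfold maxOther
    congr 1
    apply Finset.sup_congr rfl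
    intro k hk
    rw [hupd i k (Finset.ne_of_mem_erase hk) j]
  -- step inequality for declared utility of the updating bidder
  have hstep_uD : ∀ i : Fin n, (α/β) * uD i.castSucc i ≤ uD i.succ i := by
    intro i
    have h1 := haggr i (T i.castSucc i)
    have h2 := hsafe i.castSucc i
    have hmoS : ∑ j ∈ T i.castSucc i, maxOther (b i.succ) i j
        = ∑ j ∈ T i.castSucc i, maxOther (b i.castSucc) i j :=
      Finset.sum_congr rfl fun j _ => (hmo_eq i j).symm
    rw [hmoS] at h1
    have h3 : uD i.castSucc i / β
        ≤ v i (T i.castSucc i) - ∑ j ∈ T i.castSucc i, maxOther (b i.castSucc) i j := by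
      rw [div_le_iff₀ hβ0]
      calc uD i.castSucc i
          ≤ β * (v i (T i.castSucc i) - ∑ j ∈ T i.castSucc i, maxOther (b i.castSucc) i j) := h2
        _ = (v i (T i.castSucc i) - ∑ j ∈ T i.castSucc i, maxOther (b i.castSucc) i j) * β := by
            ring
    calc (α/β) * uD i.castSucc i = α * (uD i.castSucc i / β) := by ring
      _ ≤ α * (v i (T i.castSucc i) - ∑ j ∈ T i.castSucc i, maxOther (b i.castSucc) i j) :=
          mul_le_mul_of_nonneg_left h3 (le_of_lt hα)
      _ ≤ uD i.succ i := h1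
  -- per-step change of DW
  have hDWstep : ∀ i : Fin n,
      DW (b i.succ) = DW (b i.castSucc) + (uD i.succ i - uD i.castSucc i) := by
    intro i
    have e1 := hId i.castSucc i
    have e2 := hId i.succ i
    have e3 : ∑ j, maxOther (b i.succ) i j = ∑ j, maxOther (b i.castSucc) i j :=
      Finset.sum_congr rfl fun j _ => (hmo_eq i j).symm
    rw [e3] at e2
    linarith
  -- bids don't change before one's own move
  have hfix : ∀ (s : ℕ) (hs : s ≤ n) (k : Fin n), s ≤ (k:ℕ) → ∀ j,
      b ⟨s, Nat.lt_succ_of_le hs⟩ k j = b 0 k j := by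
    intro s
    induction s with
    | zero =>
      intro _ k _ j
      rfl
    | succ s ih =>
      intro hs k hk j
      have hsn : s < n := by have := k.isLt; omega
      set i : Fin n := ⟨s, hsn⟩ with hi
      have hki : k ≠ i := by
        intro e
        have : (k:ℕ) = s := by rw [e]
        omega
      have h1 : b i.castSucc k j = b i.succ k j := hupd i k hki j
      have h2 : i.succ = (⟨s+1, Nat.lt_succ_of_le hs⟩ : Fin (n+1)) := rfl
      have h3 : i.castSucc = (⟨s, Nat.lt_succ_of_le (le_of_lt hsn)⟩ : Fin (n+1)) := rfl
      rw [← h2, ← h1, h3, ih (le_of_lt hsn) k (by omega) j]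
  -- the charging lemma: total declared utility of movers at their move time ≤ DW (b 0)
  have hcharge : ∑ i : Fin n, uD i.castSucc i ≤ DW (b 0) := by
    have key : ∀ j : Fin m,
        ∑ i : Fin n, (if j ∈ T i.castSucc i
          then b i.castSucc i j - maxOther (b i.castSucc) i j else 0) ≤ Msup (b 0) j := by
      intro j
      set g : ℕ → ℝ := fun s =>
        (((Finset.univ.filter fun k : Fin n => s ≤ (k:ℕ)).sup
          fun k => Real.toNNReal (b 0 k j) : NNReal) : ℝ) with hg
      have hg0 : g 0 = Msup (b 0) j := by
        have : (Finset.univ.filter fun k : Fin n => 0 ≤ (k:ℕ)) = Finset.univ := by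
          apply Finset.filter_true_of_mem; intro k _; omega
        simp [hg, this, Msup]
      have hgn : g n = 0 := by
        have : (Finset.univ.filter fun k : Fin n => n ≤ (k:ℕ)) = ∅ := by
          apply Finset.filter_false_of_mem; intro k _; have := k.isLt; omega
        simp [hg, this]
      have hganti : ∀ s : ℕ, g (s+1) ≤ g s := by
        intro s
        apply NNReal.coe_le_coe.2
        apply Finset.sup_mono
        intro k hk
        simp only [Finset.mem_filter] at hk ⊢
        exact ⟨hk.1, by omega⟩
      have hstep : ∀ i : Fin n,
          (if j ∈ T i.castSucc i then b i.castSucc i j - maxOther (b i.castSucc) i j else 0)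
            ≤ g i - g ((i:ℕ)+1) := by
        intro i
        by_cases hj : j ∈ T i.castSucc i
        · rw [if_pos hj]
          have hcast : i.castSucc = (⟨(i:ℕ), Nat.lt_succ_of_le (le_of_lt i.isLt)⟩ : Fin (n+1)) :=
            rfl
          -- bidder i's bid at time i equals his initial bid
          have hb0 : b i.castSucc i j = b 0 i j := by
            rw [hcast]
            exact hfix (i:ℕ) (le_of_lt i.isLt) i (le_refl _) j
          -- b 0 i j ≤ g i
          have hle1 : b 0 i j ≤ g (i:ℕ) := by
            rw [hg]
            have hmem : i ∈ Finset.univ.filter fun k : Fin n => (i:ℕ) ≤ (k:ℕ) := by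
              simp
            have h3 := coe_le_sup' (Finset.univ.filter fun k : Fin n => (i:ℕ) ≤ (k:ℕ))
              (fun k => Real.toNNReal (b 0 k j)) hmem
            rw [Real.coe_toNNReal _ (hnonneg 0 i j)] at h3
            exact h3
          -- g (i+1) ≤ maxOther at time i
          have hle2 : g ((i:ℕ)+1) ≤ maxOther (b i.castSucc) i j := by
            rw [hg]
            apply sup_coe_le' _ _ (hmo_nonneg i.castSucc i j)
            intro k hk
            simp only [Finset.mem_filter] at hk
            have hki : (i:ℕ) + 1 ≤ (k:ℕ) := hk.2
            have hkne : k ≠ i := by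
              intro e; rw [e] at hki; omega
            rw [Real.coe_toNNReal _ (hnonneg 0 k j)]
            have : b i.castSucc k j = b 0 k j := by
              rw [hcast]
              exact hfix (i:ℕ) (le_of_lt i.isLt) k (by omega) j
            rw [← this]
            exact hmo_le i.castSucc i j k hkne
          linarith
        · rw [if_neg hj]
          have := hganti (i:ℕ)
          linarith
      calc ∑ i : Fin n, (if j ∈ T i.castSucc i
            then b i.castSucc i j - maxOther (b i.castSucc) i j else 0)
          ≤ ∑ i : Fin n, (g (i:ℕ) - g ((i:ℕ)+1)) := Finset.sum_le_sum fun i _ => hstep i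
        _ = ∑ s ∈ Finset.range n, (g s - g (s+1)) :=
            Fin.sum_univ_eq_sum_range (fun s => g s - g (s+1)) n
        _ = g 0 - g n := Finset.sum_range_sub' g n
        _ = Msup (b 0) j := by rw [hg0, hgn]; ring
    have hsw : ∑ i : Fin n, uD i.castSucc i
        = ∑ j : Fin m, ∑ i : Fin n, (if j ∈ T i.castSucc i
            then b i.castSucc i j - maxOther (b i.castSucc) i j else 0) := by
      rw [Finset.sum_comm]
      apply Finset.sum_congr rfl
      intro i _
      show (∑ j ∈ T i.castSucc i, (b i.castSucc i j - maxOther (b i.castSucc) i j)) = _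
      rw [← Finset.univ_inter (T i.castSucc i), ← Finset.sum_ite_mem]
      simp
    rw [hsw, DW_eq_sum_Msup]
    exact Finset.sum_le_sum fun j _ => key j
  -- telescoping DW over the whole sequence
  have htel : DW (b (Fin.last n)) = DW (b 0)
      + (∑ i : Fin n, uD i.succ i - ∑ i : Fin n, uD i.castSucc i) := by
    set G : ℕ → ℝ := fun s => DW (b ⟨min s n, by omega⟩) with hG
    have hG0 : G 0 = DW (b 0) := by
      have e : (⟨min 0 n, by omega⟩ : Fin (n+1)) = 0 := by
        apply Fin.ext; simp
      show DW (b ⟨min 0 n, by omega⟩) = DW (b 0)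
      rw [e]
    have hGn : G n = DW (b (Fin.last n)) := by
      have e : (⟨min n n, by omega⟩ : Fin (n+1)) = Fin.last n := by
        apply Fin.ext; simp [Fin.last]
      show DW (b ⟨min n n, by omega⟩) = DW (b (Fin.last n))
      rw [e]
    have hGs : ∀ i : Fin n, G ((i:ℕ)+1) - G (i:ℕ) = uD i.succ i - uD i.castSucc i := by
      intro i
      have h1 : (⟨min ((i:ℕ)+1) n, by omega⟩ : Fin (n+1)) = i.succ := by
        apply Fin.ext
        have := i.isLt
        simp only [Fin.val_succ]
        omega
      have h2 : (⟨min (i:ℕ) n, by omega⟩ : Fin (n+1)) = i.castSucc := by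
        apply Fin.ext
        have := i.isLt
        simp only [Fin.coe_castSucc]
        omega
      show DW (b ⟨min ((i:ℕ)+1) n, by omega⟩) - DW (b ⟨min (i:ℕ) n, by omega⟩) = _
      rw [h1, h2, hDWstep i]; ring
    have : ∑ i : Fin n, (G ((i:ℕ)+1) - G (i:ℕ)) = G n - G 0 := by
      rw [Fin.sum_univ_eq_sum_range (fun s => G (s+1) - G s) n]
      exact Finset.sum_range_sub G n
    rw [Finset.sum_congr rfl (fun i _ => hGs i)] at this
    rw [Finset.sum_sub_distrib] at this
    rw [← hG0, ← hGn]
    linarith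
  -- put everything together
  have hsum : (α/β) * ∑ i : Fin n, uD i.castSucc i ≤ ∑ i : Fin n, uD i.succ i := by
    rw [Finset.mul_sum]
    exact Finset.sum_le_sum fun i _ => hstep_uD i
  have hab1 : α / β ≤ 1 := by
    rw [div_le_one hβ0]; linarith
  have hfin : (1 - α/β) * (∑ i : Fin n, uD i.castSucc i) ≤ (1 - α/β) * DW (b 0) :=
    mul_le_mul_of_nonneg_left hcharge (by linarith)
  nlinarith [htel, hsum, hfin]
end

section
/- In a β-safe round-robin bidding dynamic with α-aggressive bid updates (0 < α ≤ 1 ≤ β), for any time step t ≥ n, the social welfare satisfies SW(b^t) ≥ (α / ((1 + α + β)·β)) · OPT(v), where OPT(v) is the maximum of sum_i v_i(S_i) over all partitions S_1,...,S_n of the items. -/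
open Finset

/-- Maximum bid on item `j` among all bidders. -/
noncomputable def pAll {n m : ℕ} (b : Fin n → Fin m → ℝ) (j : Fin m) : ℝ :=
  ((Finset.univ.sup fun k => Real.toNNReal (b k j) : NNReal) : ℝ)

lemma pAll_nonneg {n m : ℕ} (b : Fin n → Fin m → ℝ) (j : Fin m) : 0 ≤ pAll b j :=
  NNReal.coe_nonneg _

lemma maxOther_nonneg {n m : ℕ} (b : Fin n → Fin m → ℝ) (i : Fin n) (j : Fin m) :
    0 ≤ maxOther b i j := NNReal.coe_nonneg _

lemma le_pAll {n m : ℕ} (b : Fin n → Fin m → ℝ) (k : Fin n) (j : Fin m) :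
    b k j ≤ pAll b j :=
  le_trans (Real.le_coe_toNNReal _)
    (NNReal.coe_le_coe.2 (Finset.le_sup (f := fun k => Real.toNNReal (b k j)) (Finset.mem_univ k)))

lemma maxOther_le_pAll {n m : ℕ} (b : Fin n → Fin m → ℝ) (i : Fin n) (j : Fin m) :
    maxOther b i j ≤ pAll b j :=
  NNReal.coe_le_coe.2 (Finset.sup_mono (Finset.erase_subset _ _))

lemma le_maxOther {n m : ℕ} (b : Fin n → Fin m → ℝ) {k i : Fin n} (j : Fin m) (h : k ≠ i) :
    b k j ≤ maxOther b i j :=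
  le_trans (Real.le_coe_toNNReal _)
    (NNReal.coe_le_coe.2 (Finset.le_sup (f := fun k => Real.toNNReal (b k j))
      (Finset.mem_erase.2 ⟨h, Finset.mem_univ k⟩)))

lemma maxOther_le_of_max {n m : ℕ} (b : Fin n → Fin m → ℝ) (i : Fin n) (j : Fin m)
    (h : ∀ k, b k j ≤ b i j) (h0 : 0 ≤ b i j) : maxOther b i j ≤ b i j := by
  have hs : (Finset.univ.erase i).sup (fun k => Real.toNNReal (b k j))
      ≤ Real.toNNReal (b i j) :=
    Finset.sup_le fun k _ => Real.toNNReal_mono (h k)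
  calc maxOther b i j ≤ ((Real.toNNReal (b i j) : NNReal) : ℝ) := NNReal.coe_le_coe.2 hs
    _ = b i j := Real.coe_toNNReal _ h0

lemma pAll_eq_of_max {n m : ℕ} (b : Fin n → Fin m → ℝ) (i : Fin n) (j : Fin m)
    (h : ∀ k, b k j ≤ b i j) (h0 : 0 ≤ b i j) : pAll b j = b i j := by
  refine le_antisymm ?_ (le_pAll b i j)
  have hs : Finset.univ.sup (fun k => Real.toNNReal (b k j)) ≤ Real.toNNReal (b i j) :=
    Finset.sup_le fun k _ => Real.toNNReal_mono (h k)
  calc pAll b j ≤ ((Real.toNNReal (b i j) : NNReal) : ℝ) := NNReal.coe_le_coe.2 hs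
    _ = b i j := Real.coe_toNNReal _ h0

lemma maxOther_congr {n m : ℕ} {b b' : Fin n → Fin m → ℝ} (i : Fin n) (j : Fin m)
    (h : ∀ k, k ≠ i → b k j = b' k j) : maxOther b i j = maxOther b' i j := by
  unfold maxOther
  norm_cast
  exact Finset.sup_congr rfl fun k hk => by rw [h k (Finset.mem_erase.1 hk).1]

lemma modcancel {x d d' n : ℕ} (hn : 0 < n) (hx : x < n) (hd : d < n) (hd' : d' < n)
    (h : (x + d) % n = (x + d') % n) : d = d' := by
  have e : ∀ y, y < n → (x + y) % n = if x + y < n then x + y else x + y - n := by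
    intro y hy
    split
    · exact Nat.mod_eq_of_lt ‹_›
    · rw [Nat.mod_eq_sub_mod (by omega)]
      exact Nat.mod_eq_of_lt (by omega)
  rw [e d hd, e d' hd'] at h
  split_ifs at h <;> omega

lemma sum_partition {n m : ℕ} (S : Fin n → Finset (Fin m)) (hS : ∀ j, ∃! i, j ∈ S i)
    (f : Fin m → ℝ) : ∑ i, ∑ j ∈ S i, f j = ∑ j, f j := by
  calc ∑ i, ∑ j ∈ S i, f j = ∑ i, ∑ j, if j ∈ S i then f j else 0 := by
        refine Finset.sum_congr rfl fun i _ => ?_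
        rw [Finset.sum_ite_mem, Finset.univ_inter]
    _ = ∑ j, ∑ i, if j ∈ S i then f j else 0 := Finset.sum_comm
    _ = ∑ j, f j := by
        refine Finset.sum_congr rfl fun j _ => ?_
        obtain ⟨i₀, hi₀, huniq⟩ := hS j
        rw [Finset.sum_eq_single i₀]
        · rw [if_pos hi₀]
        · intro i _ hne
          rw [if_neg fun h => hne (huniq i h)]
        · intro h; exact absurd (Finset.mem_univ i₀) h

/-- Pointwise welfare guarantee: in a `β`-safe round-robin bidding dynamic with `α`-aggressive
bid updates, at any time `t ≥ n` the social welfare is at least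
`α/((1+α+β)·β)` times the optimal welfare (i.e. at least that fraction of the welfare of any
partition `S*` of the items). -/
theorem stmt4 (n m : ℕ) (hn : 0 < n) (α β : ℝ) (hα : 0 < α) (hα1 : α ≤ 1) (hβ : 1 ≤ β)
    (v : Fin n → Finset (Fin m) → ℝ) (hv : ∀ i S, 0 ≤ v i S)
    (b : ℕ → Fin n → Fin m → ℝ)
    (hnonneg : ∀ t i j, 0 ≤ b t i j)
    -- round-robin activation: at step `t+1` only bidder `t % n` changes his bid
    (hupd : ∀ t : ℕ, ∀ k : Fin n, k ≠ ⟨t % n, Nat.mod_lt t hn⟩ → ∀ j, b t k j = b (t + 1) k j)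
    -- `T t i` is the set of items won by bidder `i` at profile `b^t`
    (T : ℕ → Fin n → Finset (Fin m))
    (hpart : ∀ t, ∀ j : Fin m, ∃! i : Fin n, j ∈ T t i)
    (hwin : ∀ t, ∀ i : Fin n, ∀ j ∈ T t i, ∀ k : Fin n, b t k j ≤ b t i j)
    -- β-safety at every step
    (hsafe : ∀ t, ∀ i : Fin n,
      ∑ j ∈ T t i, (b t i j - maxOther (b t) i j)
        ≤ β * (v i (T t i) - ∑ j ∈ T t i, maxOther (b t) i j))
    -- each update is α-aggressive
    (haggr : ∀ t : ℕ, ∀ S : Finset (Fin m),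
      let i : Fin n := ⟨t % n, Nat.mod_lt t hn⟩
      α * (v i S - ∑ j ∈ S, maxOther (b (t + 1)) i j)
        ≤ ∑ j ∈ T (t + 1) i, (b (t + 1) i j - maxOther (b (t + 1)) i j)) :
    ∀ t : ℕ, n ≤ t → ∀ Sstar : Fin n → Finset (Fin m),
      (∀ j : Fin m, ∃! i : Fin n, j ∈ Sstar i) →
      (α / ((1 + α + β) * β)) * ∑ i, v i (Sstar i) ≤ ∑ i, v i (T t i) := by
  intro t ht Sstar hSstar
  set a := t - n with ha
  have hat : a + n = t := by omega
  -- the updater at step `s`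
  set K : ℕ → Fin n := fun s => ⟨s % n, Nat.mod_lt s hn⟩ with hK
  -- the unique step in the window `[a, t)` at which bidder `i` updates
  set τ : Fin n → ℕ := fun i => a + ((i.val + n - t % n) % n) with hτ
  have hτ_lt : ∀ i, τ i < t := by
    intro i
    have := Nat.mod_lt (i.val + n - t % n) hn
    simp only [hτ]
    omega
  have hτ_ge : ∀ i, a ≤ τ i := fun i => Nat.le_add_right _ _
  have ha_mod : a % n = t % n := by
    conv_rhs => rw [← hat, Nat.add_mod_right]
  have hτ_mod : ∀ i, τ i % n = i.val := by
    intro i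
    have hx : t % n < n := Nat.mod_lt t hn
    have hxle : t % n ≤ i.val + n := by omega
    simp only [hτ]
    calc (a + ((i.val + n - t % n) % n)) % n
        = (a % n + ((i.val + n - t % n) % n)) % n := (Nat.mod_add_mod _ _ _).symm
      _ = (t % n + ((i.val + n - t % n) % n)) % n := by rw [ha_mod]
      _ = (t % n + (i.val + n - t % n)) % n := Nat.add_mod_mod _ _ _
      _ = (i.val + n) % n := by rw [Nat.add_sub_cancel' hxle]
      _ = i.val % n := Nat.add_mod_right _ _
      _ = i.val := Nat.mod_eq_of_lt i.isLt
  have hτK : ∀ i, K (τ i) = i := by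
    intro i
    apply Fin.ext
    simp only [hK]
    exact hτ_mod i
  have huniq : ∀ s, a ≤ s → s < t → τ (K s) = s := by
    intro s hs1 hs2
    have h1 : τ (K s) % n = s % n := by rw [hτ_mod]
    have hd1 : τ (K s) - a < n := by have := hτ_lt (K s); omega
    have hd2 : s - a < n := by omega
    have e1 : τ (K s) = a + (τ (K s) - a) := by have := hτ_ge (K s); omega
    have e2 : s = a + (s - a) := by omega
    have hmod : (a % n + (τ (K s) - a)) % n = (a % n + (s - a)) % n := by
      rw [Nat.mod_add_mod, Nat.mod_add_mod, ← e1, ← e2]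
      exact h1
    have := modcancel hn (Nat.mod_lt a hn) hd1 hd2 hmod
    omega
  -- bid constancy after the last update
  have hconst : ∀ (i : Fin n) (s : ℕ), τ i < s → s ≤ t → ∀ j, b s i j = b t i j := by
    intro i
    have key : ∀ s, τ i + 1 ≤ s → s ≤ t → ∀ j, b s i j = b (τ i + 1) i j := by
      intro s hs
      induction s, hs using Nat.le_induction with
      | base => intro _ _; rfl
      | succ s hs ih =>
        intro hst j
        have hne : i ≠ K s := by
          intro h
          have hs2 : τ (K s) = s := huniq s (by have := hτ_ge i; omega) (by omega)
          rw [← h] at hs2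
          omega
        rw [← hupd s i hne j]
        exact ih (by omega) j
    intro s hτs hst j
    rw [key s (by omega) hst j, ← key t (by omega) le_rfl j]
  -- pre-update declared-utility summands
  set D : ℕ → Fin m → ℝ := fun s j =>
    if j ∈ T s (K s) then b s (K s) j - maxOther (b s) (K s) j else 0 with hD
  -- post-update declared utility
  set U : ℕ → ℝ := fun s =>
    ∑ j ∈ T (s + 1) (K s), (b (s + 1) (K s) j - maxOther (b (s + 1)) (K s) j) with hU
  have hD_nonneg : ∀ s j, 0 ≤ D s j := by
    intro s j
    simp only [hD]
    split
    · have hw := hwin s (K s) j ‹_›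
      have := maxOther_le_of_max (b s) (K s) j hw (hnonneg s _ j)
      linarith
    · exact le_rfl
  -- one-step price bound
  have hprice1 : ∀ s j, pAll (b s) j ≤ pAll (b (s + 1)) j + D s j := by
    intro s j
    obtain ⟨w, hw, -⟩ := hpart s j
    have hmax := hwin s w j hw
    have hpeq : pAll (b s) j = b s w j := pAll_eq_of_max _ _ _ hmax (hnonneg s w j)
    by_cases hwk : w = K s
    · subst hwk
      have hMeq : maxOther (b s) (K s) j = maxOther (b (s + 1)) (K s) j :=
        maxOther_congr (K s) j fun k hk => hupd s k hk j
      have hDv : D s j = b s (K s) j - maxOther (b s) (K s) j := by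
        simp only [hD]
        rw [if_pos hw]
      have h2 : maxOther (b (s + 1)) (K s) j ≤ pAll (b (s + 1)) j := maxOther_le_pAll _ _ _
      rw [hpeq, hDv]
      linarith [hMeq]
    · have hb : b s w j = b (s + 1) w j := hupd s w hwk j
      have h2 := le_pAll (b (s + 1)) w j
      have h3 := hD_nonneg s j
      rw [hpeq, hb]
      linarith
  -- multi-step price bound
  have hprice : ∀ d s, s + d = t → ∀ j,
      pAll (b s) j ≤ pAll (b t) j + ∑ τ' ∈ Finset.Ico s t, D τ' j := by
    intro d
    induction d with
    | zero =>
      intro s hs j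
      have : s = t := by omega
      subst this
      simp [Finset.Ico_self]
    | succ d ih =>
      intro s hs j
      have h1 := hprice1 s j
      have h2 := ih (s + 1) (by omega) j
      have hst : s < t := by omega
      rw [Finset.sum_eq_sum_Ico_succ_bot hst]
      linarith
  have hDsum : ∀ s, ∑ j, D s j
      = ∑ j ∈ T s (K s), (b s (K s) j - maxOther (b s) (K s) j) := by
    intro s
    simp only [hD]
    rw [Finset.sum_ite_mem, Finset.univ_inter]
  -- α · (pre-update utility) ≤ β · (post-update utility)
  have huminus : ∀ s, α * ∑ j, D s j ≤ β * U s := by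
    intro s
    have hsafe' := hsafe s (K s)
    have hMeq : ∀ j, maxOther (b s) (K s) j = maxOther (b (s + 1)) (K s) j :=
      fun j => maxOther_congr (K s) j fun k hk => hupd s k hk j
    have haggr' : α * (v (K s) (T s (K s))
          - ∑ j ∈ T s (K s), maxOther (b (s + 1)) (K s) j) ≤ U s :=
      haggr s (T s (K s))
    have e : ∑ j ∈ T s (K s), maxOther (b s) (K s) j
        = ∑ j ∈ T s (K s), maxOther (b (s + 1)) (K s) j :=
      Finset.sum_congr rfl fun j _ => hMeq j
    rw [hDsum s]
    calc α * ∑ j ∈ T s (K s), (b s (K s) j - maxOther (b s) (K s) j)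
        ≤ α * (β * (v (K s) (T s (K s)) - ∑ j ∈ T s (K s), maxOther (b s) (K s) j)) :=
          mul_le_mul_of_nonneg_left hsafe' hα.le
      _ = β * (α * (v (K s) (T s (K s)) - ∑ j ∈ T s (K s), maxOther (b s) (K s) j)) := by
          ring
      _ ≤ β * U s := by
          refine mul_le_mul_of_nonneg_left ?_ (by linarith)
          rw [e]
          exact haggr'
  -- Lemma A: the post-update utilities telescope against the final prices
  set c : ℕ → Fin m → ℝ := fun s j =>
    if j ∈ T (s + 1) (K s) then b (s + 1) (K s) j - maxOther (b (s + 1)) (K s) j else 0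
    with hc
  have hcsum : ∀ s, U s = ∑ j, c s j := by
    intro s
    simp only [hU, hc]
    rw [Finset.sum_ite_mem, Finset.univ_inter]
  set M : ℕ → Fin m → ℝ := fun s j =>
    (((Finset.univ.filter fun k => τ k < s).sup fun k => Real.toNNReal (b t k j) : NNReal) : ℝ)
    with hM
  have hM_mono : ∀ s j, M s j ≤ M (s + 1) j := by
    intro s j
    simp only [hM]
    refine NNReal.coe_le_coe.2 (Finset.sup_mono ?_)
    intro k hk
    simp only [Finset.mem_filter] at hk ⊢
    exact ⟨hk.1, by omega⟩
  have hclaim : ∀ d s, s + d = t → a ≤ s → ∀ j,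
      (∑ τ' ∈ Finset.Ico s t, c τ' j) + M s j ≤ pAll (b t) j := by
    intro d
    induction d with
    | zero =>
      intro s hs _ j
      rw [show s = t by omega]
      have hfilter : (Finset.univ.filter fun k => τ k < t) = Finset.univ :=
        Finset.filter_true_of_mem fun k _ => hτ_lt k
      simp only [Finset.Ico_self, Finset.sum_empty, zero_add, hM, hfilter]
      exact le_rfl
    | succ d ih =>
      intro s hs has j
      have hst : s < t := by omega
      rw [Finset.sum_eq_sum_Ico_succ_bot hst]
      have ih' := ih (s + 1) (by omega) (by omega) j
      have key : c s j + M s j ≤ M (s + 1) j := by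
        have hτKs : τ (K s) = s := huniq s has hst
        simp only [hc]
        split
        · rename_i hjT
          have hb : b (s + 1) (K s) j = b t (K s) j :=
            hconst (K s) (s + 1) (by omega) (by omega) j
          have sub1 : M s j ≤ maxOther (b (s + 1)) (K s) j := by
            simp only [hM]
            refine NNReal.coe_le_coe.2 (Finset.sup_le ?_)
            intro k hk
            have hk' : τ k < s := (Finset.mem_filter.1 hk).2
            have hkK : k ≠ K s := by
              intro h
              rw [h, hτKs] at hk'
              omega
            have hbk : b t k j = b (s + 1) k j :=
              (hconst k (s + 1) (by omega) (by omega) j).symm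
            rw [hbk]
            exact Finset.le_sup (f := fun k => Real.toNNReal (b (s + 1) k j))
              (Finset.mem_erase.2 ⟨hkK, Finset.mem_univ k⟩)
          have sub2 : b t (K s) j ≤ M (s + 1) j := by
            simp only [hM]
            refine le_trans (Real.le_coe_toNNReal _) (NNReal.coe_le_coe.2
              (Finset.le_sup (f := fun k => Real.toNNReal (b t k j)) ?_))
            refine Finset.mem_filter.2 ⟨Finset.mem_univ _, ?_⟩
            omega
          rw [hb]
          linarith
        · have := hM_mono s j
          linarith
      linarith
  have hA : ∑ s ∈ Finset.Ico a t, U s ≤ ∑ j, pAll (b t) j := by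
    calc ∑ s ∈ Finset.Ico a t, U s = ∑ s ∈ Finset.Ico a t, ∑ j, c s j :=
          Finset.sum_congr rfl fun s _ => hcsum s
      _ = ∑ j, ∑ s ∈ Finset.Ico a t, c s j := Finset.sum_comm
      _ ≤ ∑ j, pAll (b t) j := by
          refine Finset.sum_le_sum fun j _ => ?_
          have h0 := hclaim (t - a) a (by omega) le_rfl j
          have hMa : M a j = 0 := by
            simp only [hM]
            have hfe : (Finset.univ.filter fun k => τ k < a) = ∅ := by
              refine Finset.filter_false_of_mem ?_
              intro k _
              have := hτ_ge k
              omega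
            rw [hfe, Finset.sup_empty]
            simp
          linarith
  -- prices at time t are bounded by β times the welfare
  have hP : ∑ j, pAll (b t) j ≤ β * ∑ i, v i (T t i) := by
    have e : ∑ i, ∑ j ∈ T t i, pAll (b t) j = ∑ j, pAll (b t) j :=
      sum_partition (T t) (hpart t) _
    rw [← e, Finset.mul_sum]
    refine Finset.sum_le_sum fun i _ => ?_
    have e2 : ∑ j ∈ T t i, pAll (b t) j = ∑ j ∈ T t i, b t i j :=
      Finset.sum_congr rfl fun j hj =>
        pAll_eq_of_max _ _ _ (hwin t i j hj) (hnonneg t i j)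
    rw [e2]
    have hs := hsafe t i
    have hM0 : 0 ≤ ∑ j ∈ T t i, maxOther (b t) i j :=
      Finset.sum_nonneg fun j _ => maxOther_nonneg _ _ _
    have hsplit : ∑ j ∈ T t i, b t i j
        = (∑ j ∈ T t i, (b t i j - maxOther (b t) i j)) + ∑ j ∈ T t i, maxOther (b t) i j := by
      rw [← Finset.sum_add_distrib]
      exact Finset.sum_congr rfl fun j _ => by ring
    nlinarith [hs, hM0, hβ]
  -- reindexing the window sum by the updating bidder
  have himg : Finset.image τ Finset.univ = Finset.Ico a t := by
    apply Finset.ext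
    intro s
    simp only [Finset.mem_image, Finset.mem_univ, true_and, Finset.mem_Ico]
    constructor
    · rintro ⟨i, rfl⟩
      exact ⟨hτ_ge i, hτ_lt i⟩
    · rintro ⟨h1, h2⟩
      exact ⟨K s, huniq s h1 h2⟩
  have hτinj : ∀ x ∈ Finset.univ, ∀ y ∈ Finset.univ, τ x = τ y → x = y := by
    intro x _ y _ h
    apply Fin.ext
    rw [← hτ_mod x, ← hτ_mod y, h]
  have hbij : ∀ g : ℕ → ℝ, ∑ s ∈ Finset.Ico a t, g s = ∑ i, g (τ i) := by
    intro g
    rw [← himg, Finset.sum_image hτinj]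
  -- the aggressiveness inequality at each bidder's last update, applied to `Sstar`
  have hmk : ∀ i : Fin n, (⟨τ i % n, Nat.mod_lt (τ i) hn⟩ : Fin n) = i :=
    fun i => Fin.ext (hτ_mod i)
  have haggrO : ∀ i, α * v i (Sstar i)
      ≤ U (τ i) + α * ∑ j ∈ Sstar i, maxOther (b (τ i + 1)) i j := by
    intro i
    have h0 : α * (v (⟨τ i % n, Nat.mod_lt (τ i) hn⟩ : Fin n) (Sstar i)
          - ∑ j ∈ Sstar i, maxOther (b (τ i + 1)) ⟨τ i % n, Nat.mod_lt (τ i) hn⟩ j)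
        ≤ ∑ j ∈ T (τ i + 1) (⟨τ i % n, Nat.mod_lt (τ i) hn⟩ : Fin n),
            (b (τ i + 1) ⟨τ i % n, Nat.mod_lt (τ i) hn⟩ j
              - maxOther (b (τ i + 1)) ⟨τ i % n, Nat.mod_lt (τ i) hn⟩ j) :=
      haggr (τ i) (Sstar i)
    rw [hmk i] at h0
    have hUτ : U (τ i)
        = ∑ j ∈ T (τ i + 1) i, (b (τ i + 1) i j - maxOther (b (τ i + 1)) i j) := by
      simp only [hU]
      rw [hτK i]
    rw [hUτ, mul_sub] at *
    linarith
  -- the price faced by each bidder at its update is bounded via the price lemma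
  have hq : ∑ i, ∑ j ∈ Sstar i, maxOther (b (τ i + 1)) i j
      ≤ ∑ j, pAll (b t) j + ∑ s ∈ Finset.Ico a t, ∑ j, D s j := by
    have step : ∀ i, ∑ j ∈ Sstar i, maxOther (b (τ i + 1)) i j
        ≤ ∑ j ∈ Sstar i, (pAll (b t) j + ∑ s ∈ Finset.Ico a t, D s j) := by
      intro i
      refine Finset.sum_le_sum fun j _ => ?_
      have h1 : maxOther (b (τ i + 1)) i j ≤ pAll (b (τ i + 1)) j := maxOther_le_pAll _ _ _
      have h2 := hprice (t - (τ i + 1)) (τ i + 1) (by have := hτ_lt i; omega) j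
      have h3 : ∑ τ' ∈ Finset.Ico (τ i + 1) t, D τ' j ≤ ∑ τ' ∈ Finset.Ico a t, D τ' j :=
        Finset.sum_le_sum_of_subset_of_nonneg
          (Finset.Ico_subset_Ico (by have := hτ_ge i; omega) le_rfl)
          fun s _ _ => hD_nonneg s j
      linarith
    calc ∑ i, ∑ j ∈ Sstar i, maxOther (b (τ i + 1)) i j
        ≤ ∑ i, ∑ j ∈ Sstar i, (pAll (b t) j + ∑ s ∈ Finset.Ico a t, D s j) :=
          Finset.sum_le_sum fun i _ => step i
      _ = ∑ j, (pAll (b t) j + ∑ s ∈ Finset.Ico a t, D s j) := sum_partition Sstar hSstar _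
      _ = ∑ j, pAll (b t) j + ∑ j, ∑ s ∈ Finset.Ico a t, D s j := Finset.sum_add_distrib
      _ = ∑ j, pAll (b t) j + ∑ s ∈ Finset.Ico a t, ∑ j, D s j := by rw [Finset.sum_comm]
  -- assemble everything
  have hUsum : ∑ i, U (τ i) = ∑ s ∈ Finset.Ico a t, U s := (hbij U).symm
  have hDsumsum : α * ∑ s ∈ Finset.Ico a t, ∑ j, D s j
      ≤ β * ∑ s ∈ Finset.Ico a t, U s := by
    rw [Finset.mul_sum, Finset.mul_sum]
    exact Finset.sum_le_sum fun s _ => huminus s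
  have main : α * ∑ i, v i (Sstar i) ≤ (1 + α + β) * ∑ j, pAll (b t) j := by
    have t1 : α * ∑ i, v i (Sstar i)
        ≤ ∑ i, U (τ i) + α * ∑ i, ∑ j ∈ Sstar i, maxOther (b (τ i + 1)) i j := by
      rw [Finset.mul_sum, Finset.mul_sum]
      rw [← Finset.sum_add_distrib]
      exact Finset.sum_le_sum fun i _ => by
        have := haggrO i
        linarith
    have t2 : α * ∑ i, ∑ j ∈ Sstar i, maxOther (b (τ i + 1)) i j
        ≤ α * (∑ j, pAll (b t) j + ∑ s ∈ Finset.Ico a t, ∑ j, D s j) :=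
      mul_le_mul_of_nonneg_left hq hα.le
    have t3 : (1 + β) * ∑ s ∈ Finset.Ico a t, U s ≤ (1 + β) * ∑ j, pAll (b t) j :=
      mul_le_mul_of_nonneg_left hA (by linarith)
    rw [hUsum] at t1
    nlinarith [t1, t2, t3, hDsumsum]
  have hpos : (0 : ℝ) < (1 + α + β) * β := by
    have h1 : (0 : ℝ) < 1 + α + β := by linarith
    have h2 : (0 : ℝ) < β := by linarith
    exact mul_pos h1 h2
  rw [div_mul_eq_mul_div, div_le_iff₀ hpos]
  have hfin : (1 + α + β) * ∑ j, pAll (b t) j ≤ (1 + α + β) * (β * ∑ i, v i (T t i)) :=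
    mul_le_mul_of_nonneg_left hP (by linarith)
  nlinarith [main, hfin]
end

section
/- Let k be a positive integer and m = 2^k − 1. Identify items with nonzero vectors of F_2^k. For each nonzero i in F_2^k let S_i = { j ≠ 0 : i·j = 1 } (dot product over F_2). Define v_1(T) as the minimum number of sets S_i needed to cover T. Let D' = V \ {0} for a d-dimensional subspace V of F_2^k. Then v_1(M \ D') ≤ k − d, i.e., the complement of D' can be covered by k − d sets S_i. -/
open Matrix

/-!
The functionals vanishing on `V` form a space of dimension `k - d` whose common kernel is
exactly `V`. So every `j ∉ V` is detected by some vector of a basis of this annihilator.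
Identifying `F_2^k` with its dual through the dot product, these basis functionals become
`k - d` nonzero vectors, and a nonzero dot product in `F_2` equals `1`.
-/

open Module

theorem Subspace.exists_finset_dual_ne_zero_of_notMem {K E : Type*} [Field K] [AddCommGroup E]
    [Module K E] [FiniteDimensional K E] (V : Subspace K E) :
    ∃ F : Finset (Dual K E), 0 ∉ F ∧ F.card = finrank K E - finrank K V ∧
      ∀ x ∉ V, ∃ f ∈ F, f x ≠ 0 := by
  classical
  have := Free.of_divisionRing K V.dualAnnihilator
  let b := finBasis K V.dualAnnihilator
  refine ⟨Finset.univ.image (Subtype.val ∘ b), ?_, ?_, ?_⟩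
  · simp only [Finset.mem_image, Finset.mem_univ, true_and, not_exists]
    exact fun t ht => b.ne_zero t (Subtype.ext ht)
  · rw [Finset.card_image_of_injective _ (Subtype.val_injective.comp b.injective),
      Finset.card_univ, Fintype.card_fin, ← V.finrank_add_finrank_dualAnnihilator_eq,
      Nat.add_sub_cancel_left]
  · intro x hx
    by_contra! h
    -- evaluation at `x` vanishes on a basis of the annihilator, hence on all of it
    have heval : (Dual.eval K E x).domRestrict V.dualAnnihilator = 0 :=
      b.ext fun t => h _ (Finset.mem_image_of_mem _ (Finset.mem_univ t))
    refine hx (Subspace.dualAnnihilator_dualCoannihilator_eq (W := V) ▸ ?_)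
    exact (Submodule.mem_dualCoannihilator x).2 fun f hf => LinearMap.congr_fun heval ⟨f, hf⟩

theorem Submodule.exists_finset_dotProduct_ne_zero_of_notMem {K n : Type*} [Field K]
    [Fintype n] [DecidableEq n] (V : Submodule K (n → K)) :
    ∃ I : Finset (n → K), 0 ∉ I ∧ I.card = Fintype.card n - finrank K V ∧
      ∀ j ∉ V, ∃ i ∈ I, i ⬝ᵥ j ≠ 0 := by
  obtain ⟨F, hF0, hFcard, hF⟩ := Subspace.exists_finset_dual_ne_zero_of_notMem V
  let e := (dotProductEquiv K n).symm.toEquiv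
  refine ⟨F.map e.toEmbedding, ?_, ?_, fun j hj => ?_⟩
  · simpa [e] using hF0
  · rw [Finset.card_map, hFcard, finrank_fintype_fun_eq_card]
  · obtain ⟨f, hf, hfj⟩ := hF j hj
    refine ⟨e f, Finset.mem_map_of_mem _ hf, ?_⟩
    rwa [← dotProductEquiv_apply_apply, LinearEquiv.coe_toEquiv, LinearEquiv.apply_symm_apply]

theorem stmt8_general (k d : ℕ)
    (V : Submodule (ZMod 2) (Fin k → ZMod 2)) (hV : Module.finrank (ZMod 2) V = d) :
    ∃ I : Finset (Fin k → ZMod 2), (∀ i ∈ I, i ≠ 0) ∧ I.card ≤ k - d ∧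
      ∀ j : Fin k → ZMod 2, j ≠ 0 → j ∉ V → ∃ i ∈ I, i ⬝ᵥ j = 1 := by
  obtain ⟨I, hI0, hIcard, hI⟩ := V.exists_finset_dotProduct_ne_zero_of_notMem
  refine ⟨I, fun i hi hi0 => hI0 (hi0 ▸ hi), by rw [hIcard, Fintype.card_fin, hV], ?_⟩
  intro j _ hj
  obtain ⟨i, hi, hij⟩ := hI j hj
  exact ⟨i, hi, Fin.eq_one_of_ne_zero _ hij⟩

/-- Set-cover bound: identify the items with the nonzero vectors of `F_2^k` and for each
nonzero `i` let `S_i = { j ≠ 0 : i·j = 1 }` (dot product over `F_2`). For every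
`d`-dimensional subspace `V`, the complement `M \ D'` of `D' = V \ {0}` can be covered by
at most `k − d` of the sets `S_i`; i.e. `v_1(M \ D') ≤ k − d`. -/
theorem stmt8 (k d : ℕ) (hk : 0 < k) (hdk : d ≤ k)
    (V : Submodule (ZMod 2) (Fin k → ZMod 2)) (hV : Module.finrank (ZMod 2) V = d) :
    ∃ I : Finset (Fin k → ZMod 2), (∀ i ∈ I, i ≠ 0) ∧ I.card ≤ k - d ∧
      ∀ j : Fin k → ZMod 2, j ≠ 0 → j ∉ V → ∃ i ∈ I, i ⬝ᵥ j = 1 :=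
  stmt8_general k d V hV
end

section
/- Let k be a positive integer, m = 2^k − 1, ρ = 4k/m, d = k − log_2 k (assume k is a power of 2 so d is an integer). Let D be the family of sets D = V \ {0} for d-dimensional subspaces V of F_2^k, and define v_2(T) = ρ·max_{D in D} w_D(T), where w_D(T) = 0 if T is empty, w_D(T) = |D|/2 if 0 < |T ∩ D| < |D|, and w_D(T) = |D| if |T ∩ D| ∈ {0, |D|} and T ≠ ∅. Then v_2 is subadditive: v_2(S ∪ T) ≤ v_2(S) + v_2(T) for all S, T ⊆ M. -/
open scoped Classical

/-- `w_D(T)` for `D = V \ {0}`: `0` on the empty set, `|D|` on nonempty sets `T` with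
`|T ∩ D| ∈ {0, |D|}`, and `|D|/2` when `0 < |T ∩ D| < |D|`. -/
noncomputable def wD (k : ℕ) (V : Submodule (ZMod 2) (Fin k → ZMod 2))
    (T : Set (Fin k → ZMod 2)) : ℝ :=
  let D : Set (Fin k → ZMod 2) := {x | x ∈ V ∧ x ≠ 0}
  if T = ∅ then 0
  else if T ∩ D = ∅ ∨ D ⊆ T then (Nat.card D : ℝ)
  else (Nat.card D : ℝ) / 2

/-- The second bidder's valuation `v_2(T) = ρ · max_{D ∈ 𝒟} w_D(T)` with `ρ = 4k/m`,
`m = 2^k − 1`, the maximum taken over `D = V \ {0}` for `d`-dimensional subspaces `V`. -/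
noncomputable def v2 (k d : ℕ) (T : Set (Fin k → ZMod 2)) : ℝ :=
  (4 * (k : ℝ) / ((2 : ℝ) ^ k - 1)) *
    sSup {r : ℝ | ∃ V : Submodule (ZMod 2) (Fin k → ZMod 2),
      Module.finrank (ZMod 2) V = d ∧ r = wD k V T}

section aux

variable (k : ℕ) (V : Submodule (ZMod 2) (Fin k → ZMod 2))

noncomputable abbrev cD : ℝ := (Nat.card {x : Fin k → ZMod 2 | x ∈ V ∧ x ≠ 0} : ℝ)

lemma cD_nonneg : 0 ≤ cD k V := Nat.cast_nonneg _

lemma wD_nonneg (T : Set (Fin k → ZMod 2)) : 0 ≤ wD k V T := by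
  unfold wD; dsimp only; split_ifs <;> positivity

lemma wD_of_empty : wD k V (∅ : Set (Fin k → ZMod 2)) = 0 := by simp [wD]

lemma wD_of_full (T : Set (Fin k → ZMod 2)) (hT : T ≠ ∅)
    (h : T ∩ {x | x ∈ V ∧ x ≠ 0} = ∅ ∨ {x : Fin k → ZMod 2 | x ∈ V ∧ x ≠ 0} ⊆ T) :
    wD k V T = cD k V := by
  simp only [wD, if_neg hT, if_pos h]

lemma wD_of_partial (T : Set (Fin k → ZMod 2)) (hT : T ≠ ∅)
    (h : ¬(T ∩ {x | x ∈ V ∧ x ≠ 0} = ∅ ∨ {x : Fin k → ZMod 2 | x ∈ V ∧ x ≠ 0} ⊆ T)) :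
    wD k V T = cD k V / 2 := by
  simp only [wD, if_neg hT, if_neg h]

lemma half_le_wD (T : Set (Fin k → ZMod 2)) (hT : T ≠ ∅) :
    cD k V / 2 ≤ wD k V T := by
  have hc := cD_nonneg k V
  by_cases h : T ∩ {x | x ∈ V ∧ x ≠ 0} = ∅ ∨ {x : Fin k → ZMod 2 | x ∈ V ∧ x ≠ 0} ⊆ T
  · rw [wD_of_full k V T hT h]; linarith
  · rw [wD_of_partial k V T hT h]

lemma wD_le_card (T : Set (Fin k → ZMod 2)) :
    wD k V T ≤ (Nat.card (Fin k → ZMod 2) : ℝ) := by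
  have h1 : cD k V ≤ (Nat.card (Fin k → ZMod 2) : ℝ) := by
    exact_mod_cast Nat.card_le_card_of_injective
      (Subtype.val : {x : Fin k → ZMod 2 | x ∈ V ∧ x ≠ 0} → _) Subtype.val_injective
  have hc := cD_nonneg k V
  unfold wD; dsimp only; split_ifs
  · positivity
  · exact h1
  · linarith

lemma wD_subadd (S T : Set (Fin k → ZMod 2)) :
    wD k V (S ∪ T) ≤ wD k V S + wD k V T := by
  have hc := cD_nonneg k V
  have hwS := wD_nonneg k V S
  have hwT := wD_nonneg k V T
  set D : Set (Fin k → ZMod 2) := {x | x ∈ V ∧ x ≠ 0} with hDdef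
  by_cases hS : S = ∅
  · subst hS; simp [wD_of_empty]
  by_cases hT : T = ∅
  · subst hT; simp [wD_of_empty]
  have hST : S ∪ T ≠ ∅ := by
    intro h
    exact hS (Set.subset_empty_iff.mp (h ▸ Set.subset_union_left))
  by_cases h : (S ∪ T) ∩ D = ∅ ∨ D ⊆ S ∪ T
  · rw [wD_of_full k V _ hST h]
    rcases h with h1 | h2
    · have hS1 : S ∩ D = ∅ := by
        apply Set.eq_empty_iff_forall_notMem.mpr
        intro x hx
        exact Set.eq_empty_iff_forall_notMem.mp h1 x ⟨Or.inl hx.1, hx.2⟩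
      rw [wD_of_full k V S hS (Or.inl hS1)]
      linarith
    · by_cases hDe : D = ∅
      · have : cD k V = 0 := by
          rw [show cD k V = (Nat.card D : ℝ) from rfl, hDe]; simp
        rw [this]; linarith
      by_cases hSD : D ⊆ S
      · rw [wD_of_full k V S hS (Or.inr hSD)]; linarith
      by_cases hSD2 : S ∩ D = ∅
      · have hTD : D ⊆ T := by
          intro x hx
          rcases h2 hx with hxS | hxT
          · exact (Set.eq_empty_iff_forall_notMem.mp hSD2 x ⟨hxS, hx⟩).elim
          · exact hxT
        rw [wD_of_full k V T hT (Or.inr hTD)]; linarith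
      · have hwS' : wD k V S = cD k V / 2 :=
          wD_of_partial k V S hS (not_or.mpr ⟨hSD2, hSD⟩)
        by_cases hTD : D ⊆ T
        · rw [wD_of_full k V T hT (Or.inr hTD), hwS']; linarith
        by_cases hTD2 : T ∩ D = ∅
        · exfalso
          apply hSD
          intro x hx
          rcases h2 hx with hxS | hxT
          · exact hxS
          · exact (Set.eq_empty_iff_forall_notMem.mp hTD2 x ⟨hxT, hx⟩).elim
        · rw [hwS', wD_of_partial k V T hT (not_or.mpr ⟨hTD2, hTD⟩)]
          linarith
  · rw [wD_of_partial k V _ hST h]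
    have := half_le_wD k V S hS
    linarith

end aux

/-- The valuation `v_2` of the hard instance is subadditive on subsets of the items
(the nonzero vectors of `F_2^k`). -/
theorem stmt9 (k d : ℕ) (hk : 0 < k) (hpow : ∃ e : ℕ, k = 2 ^ e)
    (hd : d = k - Nat.log 2 k)
    (S T : Set (Fin k → ZMod 2))
    (hS : ∀ x ∈ S, x ≠ 0) (hT : ∀ x ∈ T, x ≠ 0) :
    v2 k d (S ∪ T) ≤ v2 k d S + v2 k d T := by
  unfold v2
  set ρ : ℝ := 4 * (k : ℝ) / ((2 : ℝ) ^ k - 1) with hρ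
  have hρ0 : 0 ≤ ρ := by
    apply div_nonneg
    · positivity
    · have : (2 : ℝ) ≤ (2 : ℝ) ^ k := by
        calc (2:ℝ) = 2 ^ 1 := (pow_one 2).symm
        _ ≤ 2 ^ k := by
          apply pow_le_pow_right₀ (by norm_num) hk
      linarith
  set A := {r : ℝ | ∃ V : Submodule (ZMod 2) (Fin k → ZMod 2),
      Module.finrank (ZMod 2) V = d ∧ r = wD k V (S ∪ T)}
  set B := {r : ℝ | ∃ V : Submodule (ZMod 2) (Fin k → ZMod 2),
      Module.finrank (ZMod 2) V = d ∧ r = wD k V S}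
  set C := {r : ℝ | ∃ V : Submodule (ZMod 2) (Fin k → ZMod 2),
      Module.finrank (ZMod 2) V = d ∧ r = wD k V T}
  have hBbdd : BddAbove B := by
    refine ⟨(Nat.card (Fin k → ZMod 2) : ℝ), ?_⟩
    rintro r ⟨V, _, rfl⟩
    exact wD_le_card k V S
  have hCbdd : BddAbove C := by
    refine ⟨(Nat.card (Fin k → ZMod 2) : ℝ), ?_⟩
    rintro r ⟨V, _, rfl⟩
    exact wD_le_card k V T
  have hBn : 0 ≤ sSup B := Real.sSup_nonneg (by rintro r ⟨V, _, rfl⟩; exact wD_nonneg k V S)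
  have hCn : 0 ≤ sSup C := Real.sSup_nonneg (by rintro r ⟨V, _, rfl⟩; exact wD_nonneg k V T)
  have key : sSup A ≤ sSup B + sSup C := by
    apply Real.sSup_le _ (by linarith)
    rintro r ⟨V, hV, rfl⟩
    have h1 : wD k V S ≤ sSup B := le_csSup hBbdd ⟨V, hV, rfl⟩
    have h2 : wD k V T ≤ sSup C := le_csSup hCbdd ⟨V, hV, rfl⟩
    have := wD_subadd k V S T
    linarith
  calc ρ * sSup A ≤ ρ * (sSup B + sSup C) := by
        exact mul_le_mul_of_nonneg_left key hρ0
  _ = ρ * sSup B + ρ * sSup C := by ring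
end

section
/- Let v_i be an XOS (fractionally subadditive) valuation, i.e., v_i(S) = max_ℓ sum_{j in S} v^ℓ_{i,j} with v^ℓ_{i,j} ≥ 0. Fix bids b_{-i} of the other players, let D be a demand set of bidder i (maximizing v_i(S) − sum_{j in S} max_{k≠i} b_{k,j}), and let ℓ be an index with sum_{j in D} v^ℓ_{i,j} = v_i(D). Define b_{i,j} = v^ℓ_{i,j} for j in D and b_{i,j} = 0 otherwise. Then b_i is a best response to b_{-i}, and the declared utility of bidder i equals his actual utility (i.e., the bid is 1-aggressive). -/
open Finset

/-- XOS bid update: let `v` be an XOS valuation given by nonnegative additive clauses `a ℓ`,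
let `p j = max_{k≠i} b_{k,j}` be the prices induced by the others' bids, `D` a demand set and
`ℓ` a supporting clause on `D`. Bidding `a ℓ j` on `D` and `0` elsewhere is a best response
(the set `S` then won realizes the maximum achievable utility), and the declared utility
equals the actual utility, i.e. the bid is `1`-aggressive. -/
theorem stmt12 (m L : ℕ) (hL : 0 < L)
    (a : Fin L → Fin m → ℝ) (ha : ∀ ℓ j, 0 ≤ a ℓ j)
    (v : Finset (Fin m) → ℝ)
    (hxos : ∀ S : Finset (Fin m), IsGreatest {r : ℝ | ∃ ℓ, r = ∑ j ∈ S, a ℓ j} (v S))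
    (p : Fin m → ℝ) (hp : ∀ j, 0 ≤ p j)
    (D : Finset (Fin m))
    (hD : ∀ S : Finset (Fin m), v S - ∑ j ∈ S, p j ≤ v D - ∑ j ∈ D, p j)
    (ℓ : Fin L) (hℓ : ∑ j ∈ D, a ℓ j = v D)
    (bi : Fin m → ℝ) (hbi : ∀ j, bi j = if j ∈ D then a ℓ j else 0)
    -- `S` is a set that the bid `bi` can win against prices `p` (under some tie-breaking)
    (S : Finset (Fin m))
    (hSwin : ∀ j ∈ S, p j ≤ bi j) (hSlose : ∀ j, j ∉ S → bi j ≤ p j) :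
    (∀ S' : Finset (Fin m), v S' - ∑ j ∈ S', p j ≤ v S - ∑ j ∈ S, p j)
    ∧ ∑ j ∈ S, (bi j - p j) = v S - ∑ j ∈ S, p j := by
  -- prices are 0 on S \ D
  have hp0 : ∀ j ∈ S \ D, p j = 0 := by
    intro j hj
    rw [mem_sdiff] at hj
    have h1 := hSwin j hj.1
    rw [hbi, if_neg hj.2] at h1
    exact le_antisymm h1 (hp j)
  set A : ℝ := ∑ j ∈ S ∩ D, (a ℓ j - p j) with hA
  -- demand utility ≤ A
  have h1 : v D - ∑ j ∈ D, p j ≤ A := by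
    have hsplit : ∑ j ∈ D, (a ℓ j - p j)
        = ∑ j ∈ D ∩ S, (a ℓ j - p j) + ∑ j ∈ D \ S, (a ℓ j - p j) :=
      (Finset.sum_inter_add_sum_sdiff D S _).symm
    have hneg : ∑ j ∈ D \ S, (a ℓ j - p j) ≤ 0 := by
      apply Finset.sum_nonpos
      intro j hj
      rw [mem_sdiff] at hj
      have := hSlose j hj.2
      rw [hbi, if_pos hj.1] at this
      linarith
    have : v D - ∑ j ∈ D, p j = ∑ j ∈ D, (a ℓ j - p j) := by
      rw [Finset.sum_sub_distrib, hℓ]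
    rw [this, hsplit, inter_comm D S] at *
    linarith
  -- A ≤ utility of S
  have h2 : A ≤ v S - ∑ j ∈ S, p j := by
    have hpS : ∑ j ∈ S, p j = ∑ j ∈ S ∩ D, p j := by
      rw [← Finset.sum_inter_add_sum_sdiff S D p, Finset.sum_eq_zero hp0]
      ring
    have haS : ∑ j ∈ S ∩ D, a ℓ j ≤ v S := by
      have hsub : ∑ j ∈ S ∩ D, a ℓ j ≤ ∑ j ∈ S, a ℓ j :=
        Finset.sum_le_sum_of_subset_of_nonneg (inter_subset_left)
          (fun j _ _ => ha ℓ j)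
      exact hsub.trans ((hxos S).2 ⟨ℓ, rfl⟩)
    rw [hA, Finset.sum_sub_distrib, hpS]
    linarith
  have hmain : ∀ S' : Finset (Fin m), v S' - ∑ j ∈ S', p j ≤ v S - ∑ j ∈ S, p j :=
    fun S' => (hD S').trans (h1.trans h2)
  refine ⟨hmain, ?_⟩
  have heq : A = v S - ∑ j ∈ S, p j := le_antisymm h2 ((hD S).trans h1)
  have : ∑ j ∈ S, (bi j - p j) = A := by
    rw [← Finset.sum_inter_add_sum_sdiff S D (fun j => bi j - p j), hA]
    have e1 : ∑ j ∈ S ∩ D, (bi j - p j) = ∑ j ∈ S ∩ D, (a ℓ j - p j) := by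
      apply Finset.sum_congr rfl
      intro j hj
      rw [hbi, if_pos (mem_inter.mp hj).2]
    have e2 : ∑ j ∈ S \ D, (bi j - p j) = 0 := by
      apply Finset.sum_eq_zero
      intro j hj
      rw [hbi, if_neg (mem_sdiff.mp hj).2, hp0 j hj]
      ring
    rw [e1, e2]
    ring
  rw [this, heq]
end

section
/- Consider a sequence of bid profiles b^0, ..., b^T generated by choosing at each step a bidder uniformly at random from n bidders and letting only that bidder change his bid. Then for every item j, E[max_{t ≤ T} max_i b^t_{i,j}] ≤ (1 − 1/n)^{−T} · E[max_i b^T_{i,j}]. -/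
/-!
Fix a threshold `x` and let `t₀` be the first time some bid exceeds `x`, by bidder `i₀` say.
If `i₀` is never activated after `t₀`, his bid is still above `x` at time `T`. Splicing the
activations of `σ` before `t₀` with an arbitrary `i₀`-avoiding tail gives, together with the
discarded parts, an injection showing
`k^T · #{σ | the running maximum exceeds x} ≤ (k+1)^T · #{σ | the final maximum exceeds x}`
for `n = k + 1` bidders. Integrating over `x` (layer cake) gives the bound on expectations,
as `(k / (k+1))^T = (1 - 1/n)^T`.
-/

open Finset MeasureTheory
open scoped NNReal ENNReal

theorem lintegral_ofReal_const_mul_le_of_meas_lt {α : Type*} [MeasurableSpace α] (μ : Measure α)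
    {f g : α → ℝ} (hf : 0 ≤ᵐ[μ] f) (hf' : AEMeasurable f μ) (hg : 0 ≤ᵐ[μ] g)
    (hg' : AEMeasurable g μ) {a b : ℝ≥0∞}
    (h : ∀ t > 0, a * μ {x | t < f x} ≤ b * μ {x | t < g x}) :
    a * ∫⁻ x, ENNReal.ofReal (f x) ∂μ ≤ b * ∫⁻ x, ENNReal.ofReal (g x) ∂μ := by
  have anti (u : α → ℝ) : Measurable fun t => μ {x | t < u x} :=
    Antitone.measurable fun s t hst => measure_mono fun x (hx : t < u x) => hst.trans_lt hx
  rw [lintegral_eq_lintegral_meas_lt μ hf hf', lintegral_eq_lintegral_meas_lt μ hg hg',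
    ← lintegral_const_mul a (anti f), ← lintegral_const_mul b (anti g)]
  exact setLIntegral_mono' measurableSet_Ioi fun t ht => h t ht

theorem mul_sum_le_mul_sum_of_card_lt {α : Type*} [Fintype α] {f g : α → ℝ≥0} {a b : ℝ≥0}
    (h : ∀ t : ℝ≥0, a * #{x | t < f x} ≤ b * #{x | t < g x}) :
    a * ∑ x, f x ≤ b * ∑ x, g x := by
  let _ : MeasurableSpace α := ⊤
  have hcount (u : α → ℝ≥0) (t : ℝ) (ht : 0 < t) :
      Measure.count {x | t < u x} = (#{x | t.toNNReal < u x} : ℝ≥0∞) := by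
    rw [← Measure.count_apply_finset]
    congr 1
    ext x
    simp [Real.toNNReal_lt_iff_lt_coe ht.le]
  have key := lintegral_ofReal_const_mul_le_of_meas_lt Measure.count (f := fun x => (f x : ℝ))
    (g := fun x => (g x : ℝ)) (.of_forall fun x => (f x).2) (measurable_of_countable _).aemeasurable
    (.of_forall fun x => (g x).2) (measurable_of_countable _).aemeasurable
    (a := a) (b := b) fun t ht => by
      rw [hcount f t ht, hcount g t ht]
      exact_mod_cast h t.toNNReal
  simp only [lintegral_fintype, Measure.count_singleton, mul_one, ENNReal.ofReal_coe_nnreal] at key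
  exact_mod_cast key

/-- `X σ t i` is the state of agent `i` at time `t` when `σ s` is the agent activated at step
`s + 1`. -/
structure IsActivationProcess {T : ℕ} {ι β : Type*} (X : (Fin T → ι) → ℕ → ι → β) : Prop where
  apply_succ_of_ne : ∀ σ (t : Fin T) i, i ≠ σ t → X σ (t + 1) i = X σ t i
  eq_of_eqOn : ∀ σ σ' t, t ≤ T → (∀ s : Fin T, (s : ℕ) < t → σ s = σ' s) → X σ t = X σ' t

theorem IsActivationProcess.apply_eq_of_forall_ne {T : ℕ} {ι β : Type*}
    {X : (Fin T → ι) → ℕ → ι → β} (hX : IsActivationProcess X) {σ : Fin T → ι} {i : ι}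
    {t₀ t₁ : ℕ} (h₀₁ : t₀ ≤ t₁) (h₁ : t₁ ≤ T) (hσ : ∀ s : Fin T, t₀ ≤ s → σ s ≠ i) :
    X σ t₁ i = X σ t₀ i := by
  induction t₁, h₀₁ using Nat.le_induction with
  | base => rfl
  | succ t ht ih =>
    rw [← ih (by omega)]
    exact hX.apply_succ_of_ne σ ⟨t, by omega⟩ i (hσ ⟨t, by omega⟩ ht).symm

section HittingTime

variable {T : ℕ} {ι β : Type*} (X : (Fin T → ι) → ℕ → ι → β) (S : Set β)

noncomputable def hitTime (σ : Fin T → ι) : ℕ := sInf {t | ∃ i, X σ t i ∈ S}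

/-- An arbitrary agent if `S` is never hit. -/
noncomputable def hitter [Nonempty ι] (σ : Fin T → ι) : ι :=
  Classical.epsilon fun i => X σ (hitTime X S σ) i ∈ S

variable {X S} {σ σ' : Fin T → ι} {t : ℕ} {i : ι}

theorem hitTime_le (h : X σ t i ∈ S) : hitTime X S σ ≤ t :=
  Nat.sInf_le ⟨i, h⟩

theorem exists_mem_hitTime (h : X σ t i ∈ S) : ∃ j, X σ (hitTime X S σ) j ∈ S :=
  Nat.sInf_mem (s := {t | ∃ i, X σ t i ∈ S}) ⟨t, i, h⟩

theorem hitter_mem [Nonempty ι] (h : X σ t i ∈ S) : X σ (hitTime X S σ) (hitter X S σ) ∈ S :=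
  Classical.epsilon_spec (exists_mem_hitTime h)

theorem hitTime_congr (h : X σ t i ∈ S) (hσ : ∀ s ≤ hitTime X S σ, X σ' s = X σ s) :
    hitTime X S σ' = hitTime X S σ := by
  obtain ⟨j, hj⟩ := exists_mem_hitTime h
  refine le_antisymm (hitTime_le (i := j) (by rwa [hσ _ le_rfl])) (not_lt.1 fun hlt => ?_)
  obtain ⟨j', hj'⟩ := exists_mem_hitTime (X := X) (S := S) (σ := σ') (i := j)
    (by rwa [hσ _ le_rfl])
  exact Nat.notMem_of_lt_sInf hlt ⟨j', by rwa [← hσ _ hlt.le]⟩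

variable [Nonempty ι]

theorem IsActivationProcess.hit_eq_of_eqOn (hX : IsActivationProcess X) (h : X σ t i ∈ S)
    (ht : t ≤ T) (hσ : ∀ s : Fin T, (s : ℕ) < hitTime X S σ → σ' s = σ s) :
    hitTime X S σ' = hitTime X S σ ∧ hitter X S σ' = hitter X S σ := by
  have hagree (s) (hs : s ≤ hitTime X S σ) : X σ' s = X σ s :=
    hX.eq_of_eqOn σ' σ s ((hs.trans (hitTime_le h)).trans ht) fun r hr => hσ r (by omega)
  have htime := hitTime_congr h hagree
  refine ⟨htime, ?_⟩
  simp only [hitter, htime, hagree _ le_rfl]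

theorem IsActivationProcess.hitter_mem_final (hX : IsActivationProcess X) (h : X σ t i ∈ S)
    (ht : t ≤ T) (hpre : ∀ s : Fin T, (s : ℕ) < hitTime X S σ → σ' s = σ s)
    (hpost : ∀ s : Fin T, hitTime X S σ ≤ s → σ' s ≠ hitter X S σ) :
    X σ' T (hitter X S σ) ∈ S := by
  have hle := (hitTime_le h).trans ht
  rw [hX.apply_eq_of_forall_ne hle le_rfl hpost,
    hX.eq_of_eqOn σ' σ _ hle fun s hs => hpre s hs]
  exact hitter_mem h

end HittingTime

section Exchange

variable {T k : ℕ}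

/-- The first component never activates `i` from time `t` on; the second keeps what the first
discards, which makes the map injective. -/
def exchange (t : ℕ) (i : Fin (k + 1)) (p : (Fin T → Fin (k + 1)) × (Fin T → Fin k)) :
    (Fin T → Fin (k + 1)) × (Fin T → Fin (k + 1)) :=
  (fun s => if (s : ℕ) < t then p.1 s else i.succAbove (p.2 s),
    fun s => if (s : ℕ) < t then (p.2 s).castSucc else p.1 s)

theorem exchange_injective (t : ℕ) (i : Fin (k + 1)) :
    Function.Injective (exchange (T := T) t i) := by
  rintro ⟨σ, τ⟩ ⟨σ', τ'⟩ h
  simp only [exchange, Prod.mk.injEq, funext_iff] at h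
  obtain ⟨h₁, h₂⟩ := h
  refine Prod.ext (funext fun s => ?_) (funext fun s => ?_) <;> by_cases hs : (s : ℕ) < t <;>
    first | simpa [hs] using h₁ s | simpa [hs] using h₂ s

end Exchange

namespace IsActivationProcess

variable {T k : ℕ} {β : Type*} {X : (Fin T → Fin (k + 1)) → ℕ → Fin (k + 1) → β}

open Classical in
theorem pow_mul_card_exists_mem_le (hX : IsActivationProcess X) (S : Set β) :
    k ^ T * #{σ | ∃ t : Fin (T + 1), ∃ i, X σ t i ∈ S} ≤
      (k + 1) ^ T * #{σ | ∃ i, X σ T i ∈ S} := by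
  set A := ({σ | ∃ t : Fin (T + 1), ∃ i, X σ t i ∈ S} : Finset _)
  set A' := ({σ | ∃ i, X σ T i ∈ S} : Finset _)
  have hhit {σ} (hσ : σ ∈ A) : ∃ t ≤ T, ∃ i, X σ t i ∈ S := by
    obtain ⟨t, i, h⟩ := (mem_filter.1 hσ).2
    exact ⟨t, Nat.lt_succ_iff.1 t.2, i, h⟩
  let Φ p := exchange (hitTime X S p.1) (hitter X S p.1) p
  have hpre (p : (Fin T → Fin (k + 1)) × (Fin T → Fin k)) :
      ∀ s : Fin T, (s : ℕ) < hitTime X S p.1 → (Φ p).1 s = p.1 s := fun s hs => if_pos hs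
  have hΦ {p} (hp : p.1 ∈ A) :
      hitTime X S (Φ p).1 = hitTime X S p.1 ∧ hitter X S (Φ p).1 = hitter X S p.1 := by
    obtain ⟨t, ht, i, h⟩ := hhit hp
    exact hX.hit_eq_of_eqOn h ht (hpre p)
  have hmaps : Set.MapsTo Φ ↑(A ×ˢ (univ : Finset (Fin T → Fin k)))
      ↑(A' ×ˢ (univ : Finset (Fin T → Fin (k + 1)))) := by
    intro p hp
    obtain ⟨t, ht, i, h⟩ := hhit (mem_product.1 hp).1
    refine mem_product.2 ⟨mem_filter.2 ⟨mem_univ _, hitter X S p.1, ?_⟩, mem_univ _⟩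
    refine hX.hitter_mem_final h ht (hpre p) fun s hs => ?_
    simp [Φ, exchange, not_lt.2 hs, Fin.succAbove_ne]
  have hinj : Set.InjOn Φ ↑(A ×ˢ (univ : Finset (Fin T → Fin k))) := by
    intro p hp q hq hpq
    obtain ⟨htp, hip⟩ := hΦ (mem_product.1 hp).1
    obtain ⟨htq, hiq⟩ := hΦ (mem_product.1 hq).1
    have h₁ : (Φ p).1 = (Φ q).1 := congrArg Prod.fst hpq
    rw [h₁, htq] at htp
    rw [h₁, hiq] at hip
    refine exchange_injective (hitTime X S q.1) (hitter X S q.1) ?_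
    simpa only [Φ, ← htp, ← hip] using hpq
  have hcard := card_le_card_of_injOn Φ hmaps hinj
  simp only [card_product, card_univ, Fintype.card_fun, Fintype.card_fin] at hcard
  linarith

theorem pow_mul_sum_sup_le {Y : (Fin T → Fin (k + 1)) → ℕ → Fin (k + 1) → ℝ≥0}
    (hY : IsActivationProcess Y) :
    (k : ℝ≥0) ^ T * ∑ σ, univ.sup (fun q : Fin (T + 1) × Fin (k + 1) => Y σ q.1 q.2) ≤
      ((k + 1 : ℕ) : ℝ≥0) ^ T * ∑ σ, univ.sup (fun i => Y σ T i) := by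
  refine mul_sum_le_mul_sum_of_card_lt fun x => ?_
  have h := hY.pow_mul_card_exists_mem_le (Set.Ioi x)
  simp only [Finset.lt_sup_iff, mem_univ, true_and, Prod.exists, Set.mem_Ioi] at h ⊢
  exact_mod_cast h

end IsActivationProcess

theorem stmt14_general (n m T : ℕ) (hn : 2 ≤ n)
    (B : (Fin T → Fin n) → ℕ → Fin n → Fin m → ℝ)
    -- only the chosen bidder changes his bid at each step
    (hupd : ∀ (σ : Fin T → Fin n) (t : Fin T) (k : Fin n), k ≠ σ t →
      ∀ j, B σ (t : ℕ) k j = B σ ((t : ℕ) + 1) k j)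
    -- the process is adapted: bids at time `t` depend only on the activations before `t`
    (hadapted : ∀ (σ σ' : Fin T → Fin n) (t : ℕ), t ≤ T →
      (∀ s : Fin T, (s : ℕ) < t → σ s = σ' s) → ∀ i j, B σ t i j = B σ' t i j) :
    ∀ j : Fin m,
      (1 / (n : ℝ) ^ T) * ∑ σ : Fin T → Fin n,
          ((Finset.univ.sup fun q : Fin (T + 1) × Fin n =>
            Real.toNNReal (B σ (q.1 : ℕ) q.2 j) : NNReal) : ℝ)
        ≤ ((1 - (n : ℝ)⁻¹) ^ T)⁻¹ * ((1 / (n : ℝ) ^ T) * ∑ σ : Fin T → Fin n,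
            ((Finset.univ.sup fun i : Fin n => Real.toNNReal (B σ T i j) : NNReal) : ℝ)) := by
  intro j
  obtain ⟨k, rfl⟩ : ∃ k, n = k + 1 := ⟨n - 1, by omega⟩
  have hY : IsActivationProcess fun σ t i => (B σ t i j).toNNReal :=
    ⟨fun σ t i hi => by rw [hupd σ t i hi j], fun σ σ' t ht hσ => funext fun i => by
      rw [hadapted σ σ' t ht hσ i j]⟩
  have key : (k : ℝ) ^ T * ∑ σ : Fin T → Fin (k + 1),
        ((univ.sup fun q : Fin (T + 1) × Fin (k + 1) => (B σ q.1 q.2 j).toNNReal : ℝ≥0) : ℝ) ≤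
      ((k + 1 : ℕ) : ℝ) ^ T * ∑ σ : Fin T → Fin (k + 1),
        ((univ.sup fun i => (B σ T i j).toNNReal : ℝ≥0) : ℝ) := by
    exact_mod_cast hY.pow_mul_sum_sup_le
  have hk : (0 : ℝ) < (k : ℝ) ^ T := pow_pos (Nat.cast_pos.2 (by omega)) T
  have hfactor : ((1 - ((k + 1 : ℕ) : ℝ)⁻¹) ^ T)⁻¹ = ((k + 1 : ℕ) : ℝ) ^ T / (k : ℝ) ^ T := by
    push_cast
    rw [← inv_div, ← div_pow]
    field_simp
    ring
  rw [hfactor]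
  field_simp
  linarith

/-- Random activation: the activation sequence `σ : Fin T → Fin n` is drawn uniformly
(each of the `n^T` sequences with probability `n^{-T}`); the bid process `B σ` is adapted to
`σ` (the bids at time `t` depend only on the first `t` activations) and at step `t+1` only
the activated bidder `σ t` may change his bid. Then for every item `j`,
`E[max_{t ≤ T} max_i b^t_{i,j}] ≤ (1 − 1/n)^{−T} · E[max_i b^T_{i,j}]`. -/
theorem stmt14 (n m T : ℕ) (hn : 2 ≤ n)
    (B : (Fin T → Fin n) → ℕ → Fin n → Fin m → ℝ)
    (hnonneg : ∀ σ t i j, 0 ≤ B σ t i j)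
    -- only the chosen bidder changes his bid at each step
    (hupd : ∀ (σ : Fin T → Fin n) (t : Fin T) (k : Fin n), k ≠ σ t →
      ∀ j, B σ (t : ℕ) k j = B σ ((t : ℕ) + 1) k j)
    -- the process is adapted: bids at time `t` depend only on the activations before `t`
    (hadapted : ∀ (σ σ' : Fin T → Fin n) (t : ℕ), t ≤ T →
      (∀ s : Fin T, (s : ℕ) < t → σ s = σ' s) → ∀ i j, B σ t i j = B σ' t i j) :
    ∀ j : Fin m,
      (1 / (n : ℝ) ^ T) * ∑ σ : Fin T → Fin n,
          ((Finset.univ.sup fun q : Fin (T + 1) × Fin n =>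
            Real.toNNReal (B σ (q.1 : ℕ) q.2 j) : NNReal) : ℝ)
        ≤ ((1 - (n : ℝ)⁻¹) ^ T)⁻¹ * ((1 / (n : ℝ) ^ T) * ∑ σ : Fin T → Fin n,
            ((Finset.univ.sup fun i : Fin n => Real.toNNReal (B σ T i j) : NNReal) : ℝ)) :=
  stmt14_general n m T hn B hupd hadapted
end

section
/- Consider a β-safe sequence of bid profiles b^0, ..., b^T where at each step a bidder chosen uniformly at random updates his bid α-aggressively (0 < α ≤ 1 ≤ β), with T = n ≥ 2. Then E[SW(b^T)] ≥ (α/(2(1+4α)β))·OPT(v). -/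
open Finset

/-
For a fixed activation sequence `σ`, α-aggressiveness at the last activation of each activated
bidder `i` bounds `α · v_i(S*_i)` by his bid surplus plus `α` times the prices on `S*_i`, and
these prices are at most the peak bids over time. On each item the surpluses of the last
activations telescope to at most the final top bid, and by β-safety the final top bids sum to at
most `β · SW`.

Averaging over `σ`, each bidder is activated with probability `1 - (1 - 1/n)^n ≥ 1/2`, and the
expected peak bid is at most `(1 - 1/n)^(-n) ≤ 4` times the expected final top bid: the top
bidder at time `s` keeps his bid to the end with probability `(1 - 1/n)^(n - s)`, and the peak
over `[s, n]` exceeds the peak over `[s + 1, n]` only if he is activated at step `s`, which has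
probability `1/n`.
-/

open Function Real
open scoped NNReal

lemma one_sub_one_div_pow_le_half {n : ℕ} (hn : 1 ≤ n) : (1 - 1 / (n : ℝ)) ^ n ≤ 1 / 2 := by
  have h2 : (2 : ℝ) < exp 1 := lt_trans (by norm_num) exp_one_gt_d9
  calc (1 - 1 / (n : ℝ)) ^ n ≤ exp (-1) := one_sub_div_pow_le_exp_neg (by exact_mod_cast hn)
    _ ≤ 1 / 2 := by
      rw [exp_neg, inv_eq_one_div]
      gcongr

lemma one_div_four_le_one_sub_one_div_pow {n : ℕ} (hn : 2 ≤ n) :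
    1 / 4 ≤ (1 - 1 / (n : ℝ)) ^ n := by
  obtain rfl | rfl | hn4 : n = 2 ∨ n = 3 ∨ 4 ≤ n := by omega
  · norm_num
  · norm_num
  -- `1 + 1/(n-1) ≤ exp (1/(n-1))` inverts to `exp (-1/(n-1)) ≤ 1 - 1/n`,
  -- and `n/(n-1) ≤ 4/3 < log 4`
  have hn' : (4 : ℝ) ≤ n := by exact_mod_cast hn4
  have hbase : exp (-(1 / ((n : ℝ) - 1))) ≤ 1 - 1 / n := by
    have h := add_one_le_exp (1 / ((n : ℝ) - 1))
    have hsub : (n : ℝ) - 1 ≠ 0 := by linarith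
    have hpos : (0 : ℝ) < 1 - 1 / n := by rw [sub_pos, div_lt_one] <;> linarith
    rw [show 1 / ((n : ℝ) - 1) + 1 = (1 - 1 / (n : ℝ))⁻¹ by field_simp; ring] at h
    rw [exp_neg]
    exact (inv_le_comm₀ hpos (exp_pos _)).mp h
  have hexp : (1 / 4 : ℝ) ≤ exp (-(n * (1 / ((n : ℝ) - 1)))) := by
    have hlog : (4 / 3 : ℝ) < log 4 := by
      rw [show (4 : ℝ) = 2 ^ 2 by norm_num, log_pow]
      linarith [log_two_gt_d9]
    rw [exp_neg, one_div, inv_le_inv₀ (by norm_num) (exp_pos _),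
      ← exp_log (by norm_num : (0 : ℝ) < 4)]
    gcongr
    rw [mul_one_div, div_le_iff₀ (by linarith)]
    nlinarith
  calc (1 / 4 : ℝ) ≤ exp (-(n * (1 / ((n : ℝ) - 1)))) := hexp
    _ = exp (-(1 / ((n : ℝ) - 1))) ^ n := by rw [← exp_nat_mul, neg_mul_eq_mul_neg]
    _ ≤ (1 - 1 / n) ^ n := pow_le_pow_left₀ (exp_pos _).le hbase n

lemma one_sub_one_div_pow_mul_le_of_le_add {N : ℝ} (hN : 1 ≤ N) {R S : ℕ → ℝ} {T : ℕ}
    (hT : R T ≤ S T) (hstep : ∀ s < T, R s ≤ R (s + 1) + S s / N)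
    (hS : ∀ s ≤ T, (1 - 1 / N) ^ (T - s) * S s ≤ S T) :
    (1 - 1 / N) ^ T * R 0 ≤ S T := by
  have hc : 0 ≤ 1 - 1 / N := by rw [sub_nonneg, div_le_one (by linarith)]; exact hN
  suffices ∀ s ≤ T, (1 - 1 / N) ^ (T - s) * R s ≤ S T by simpa using this 0 T.zero_le
  intro s hs
  induction hs using Nat.decreasingInduction with
  | self => simpa using hT
  | of_succ s hs ih =>
    have hk : T - s = T - (s + 1) + 1 := by omega
    calc (1 - 1 / N) ^ (T - s) * R s ≤ (1 - 1 / N) ^ (T - s) * (R (s + 1) + S s / N) :=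
          mul_le_mul_of_nonneg_left (hstep s hs) (pow_nonneg hc _)
      _ = (1 - 1 / N) * ((1 - 1 / N) ^ (T - (s + 1)) * R (s + 1))
            + 1 / N * ((1 - 1 / N) ^ (T - s) * S s) := by rw [hk]; ring
      _ ≤ (1 - 1 / N) * S T + 1 / N * S T := by
          have := hS s hs.le
          gcongr
      _ = S T := by ring

lemma sum_sum_of_existsUnique_mem {ι κ M : Type*} [Fintype ι] [Fintype κ] [DecidableEq κ]
    [AddCommMonoid M] (P : ι → Finset κ) (hP : ∀ j, ∃! i, j ∈ P i) (f : κ → M) :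
    ∑ i, ∑ j ∈ P i, f j = ∑ j, f j := by
  rw [← sum_biUnion fun i _ i' _ h => disjoint_left.2 fun j hi hi' => h ((hP j).unique hi hi')]
  congr
  ext j
  simpa using (hP j).exists

section Sequences

variable {ι : Type*} {T : ℕ}

lemma card_mul_sum_ite_eq [Fintype ι] [DecidableEq ι] {κ : Type*} [Fintype κ] [DecidableEq κ]
    (s : κ) {f : (κ → ι) → ℝ} {g : (κ → ι) → ι} (hf : ∀ σ a, f (update σ s a) = f σ)
    (hg : ∀ σ a, g (update σ s a) = g σ) :
    Fintype.card ι * ∑ σ, (if σ s = g σ then f σ else 0) = ∑ σ, f σ := by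
  rcases isEmpty_or_nonempty ι with hι | ⟨⟨a₀⟩⟩
  · have : IsEmpty (κ → ι) := ⟨fun σ => hι.false (σ s)⟩
    simp
  set e := Equiv.funSplitAt s ι
  simp only [← e.symm.sum_comp, Fintype.sum_prod_type_right]
  rw [mul_sum]
  refine sum_congr rfl fun r _ => ?_
  obtain ⟨σ₀, he⟩ : ∃ σ₀, ∀ a, e.symm (a, r) = update σ₀ s a :=
    ⟨e.symm (a₀, r), fun a => by ext k; by_cases h : k = s <;> simp [e, h]⟩
  simp [he, hf, hg]

lemma natCast_card_sub_one_pow [Fintype ι] [Nonempty ι] (k : ℕ) :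
    ((Fintype.card ι - 1 : ℕ) : ℝ) ^ k
      = (Fintype.card ι : ℝ) ^ k * (1 - 1 / (Fintype.card ι : ℝ)) ^ k := by
  have hN : (Fintype.card ι : ℝ) ≠ 0 := by positivity
  rw [Nat.cast_sub Fintype.card_pos, ← mul_pow]
  field_simp
  push_cast
  ring

lemma sum_sum_image_eq [Fintype ι] [DecidableEq ι] [Nonempty ι] {κ : Type*} [Fintype κ]
    [DecidableEq κ] (w : ι → ℝ) :
    ∑ σ : κ → ι, ∑ i ∈ univ.image σ, w i
      = (Fintype.card ι : ℝ) ^ Fintype.card κ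
          * (1 - (1 - 1 / (Fintype.card ι : ℝ)) ^ Fintype.card κ) * ∑ i, w i := by
  have hmiss : ∀ i, #{σ : κ → ι | i ∉ univ.image σ} = (Fintype.card ι - 1) ^ Fintype.card κ := by
    intro i
    rw [show ({σ : κ → ι | i ∉ univ.image σ} : Finset (κ → ι))
        = Fintype.piFinset fun _ => univ.erase i by ext σ; simp [eq_comm]]
    simp
  have hhit : ∀ i, (#{σ : κ → ι | i ∈ univ.image σ} : ℝ)
      = (Fintype.card ι : ℝ) ^ Fintype.card κ
          * (1 - (1 - 1 / (Fintype.card ι : ℝ)) ^ Fintype.card κ) := by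
    intro i
    have h := card_filter_add_card_filter_not (s := (univ : Finset (κ → ι))) (i ∈ univ.image ·)
    rw [hmiss, card_univ, Fintype.card_fun] at h
    rw [mul_sub, mul_one, ← natCast_card_sub_one_pow, eq_sub_iff_add_eq]
    exact_mod_cast h
  have hind : ∀ σ : κ → ι, ∑ i ∈ univ.image σ, w i = ∑ i, if i ∈ univ.image σ then w i else 0 :=
    fun σ => by rw [sum_ite_mem, univ_inter]
  rw [sum_congr rfl fun σ _ => hind σ, sum_comm, mul_sum]
  simp_rw [← sum_filter, sum_const, nsmul_eq_mul, hhit]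

lemma half_pow_mul_sum_le_sum_sum_image {n : ℕ} (hn : 1 ≤ n) {w : Fin n → ℝ} (hw : ∀ i, 0 ≤ w i) :
    (n : ℝ) ^ n / 2 * ∑ i, w i ≤ ∑ σ : Fin n → Fin n, ∑ i ∈ univ.image σ, w i := by
  have : NeZero n := ⟨by omega⟩
  rw [sum_sum_image_eq, Fintype.card_fin]
  have := one_sub_one_div_pow_le_half hn
  gcongr
  · exact sum_nonneg fun i _ => hw i
  · nlinarith [pow_pos (by positivity : (0 : ℝ) < n) n]

def cylinder (s : ℕ) (σ : Fin T → ι) (E : Finset ι) : Finset (Fin T → ι) :=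
  Fintype.piFinset fun t => if (t : ℕ) < s then {σ t} else E

lemma mem_cylinder {s : ℕ} {σ σ' : Fin T → ι} {E : Finset ι} :
    σ' ∈ cylinder s σ E ↔ ∀ t : Fin T, ((t : ℕ) < s → σ' t = σ t) ∧ (s ≤ t → σ' t ∈ E) := by
  simp only [cylinder, Fintype.mem_piFinset]
  refine forall_congr' fun t => ?_
  split_ifs with h <;> simp [h, not_lt.1]

lemma card_cylinder (s : ℕ) (σ : Fin T → ι) (E : Finset ι) :
    #(cylinder s σ E) = #E ^ (T - s) := by
  have h := card_filter_add_card_filter_not (s := (univ : Finset (Fin T))) (· < s)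
  simp only [not_lt, Fin.card_filter_val_lt, card_univ, Fintype.card_fin] at h
  simp only [cylinder, Fintype.card_piFinset, apply_ite card, card_singleton, prod_ite,
    prod_const_one, prod_const, one_mul, not_lt]
  congr 1
  omega

lemma sum_sum_cylinder_univ [Fintype ι] (s : ℕ) (F : (Fin T → ι) → ℝ) :
    ∑ σ, ∑ σ' ∈ cylinder s σ univ, F σ' = (Fintype.card ι : ℝ) ^ (T - s) * ∑ σ, F σ := by
  rw [sum_comm' (t' := univ) (s' := fun σ' => cylinder s σ' univ)
    (by simp only [mem_univ, true_and, and_true, mem_cylinder]; grind)]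
  simp [card_cylinder, mul_sum]

/-- `σ t` is the bidder activated at step `t`, which moves the profile from `b t` to `b (t + 1)`. -/
def OnlyActiveMoves {α : Type*} (σ : Fin T → ι) (b : ℕ → ι → α) : Prop :=
  ∀ (t : Fin T) (k : ι), k ≠ σ t → b t k = b (t + 1) k

def IsAdapted {α : Type*} (x : (Fin T → ι) → ℕ → α) : Prop :=
  ∀ σ σ' (t : ℕ), t ≤ T → (∀ s : Fin T, (s : ℕ) < t → σ s = σ' s) → x σ t = x σ' t

lemma eq_of_not_activated {α : Type*} {σ : Fin T → ι} {b : ℕ → ι → α}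
    (hupd : OnlyActiveMoves σ b) {i : ι} {s r : ℕ} (hsr : s ≤ r) (hrT : r ≤ T)
    (hi : ∀ t : Fin T, s ≤ t → (t : ℕ) < r → σ t ≠ i) :
    b r i = b s i := by
  induction r, hsr using Nat.le_induction with
  | base => rfl
  | succ r hsr ih =>
    have hne : i ≠ σ ⟨r, hrT⟩ := (hi ⟨r, hrT⟩ hsr r.lt_succ_self).symm
    rw [← hupd ⟨r, hrT⟩ i hne, ih (by omega) fun t h1 h2 => hi t h1 (by omega)]

variable [DecidableEq ι]

def lastActivations (σ : Fin T → ι) : Finset (Fin T) := {t | ∀ r, t < r → σ r ≠ σ t}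

lemma image_lastActivations (σ : Fin T → ι) : (lastActivations σ).image σ = univ.image σ := by
  refine (image_subset_image (subset_univ _)).antisymm fun i hi => ?_
  obtain ⟨t₀, -, rfl⟩ := mem_image.1 hi
  obtain ⟨t, ht, hmax⟩ := exists_max_image {t | σ t = σ t₀} id ⟨t₀, by simp⟩
  rw [mem_filter] at ht
  refine mem_image.2 ⟨t, mem_filter.2 ⟨mem_univ t, fun r hr hσ => ?_⟩, ht.2⟩
  exact (hmax r (mem_filter.2 ⟨mem_univ r, hσ.trans ht.2⟩)).not_gt hr

lemma injOn_lastActivations (σ : Fin T → ι) : Set.InjOn σ (lastActivations σ) := by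
  intro t ht r hr h
  rw [mem_coe, lastActivations, mem_filter] at ht hr
  rcases lt_trichotomy t r with htr | rfl | hrt
  · exact absurd h.symm (ht.2 r htr)
  · rfl
  · exact absurd h (hr.2 t hrt)

lemma apply_eq_of_mem_lastActivations {α : Type*} {σ : Fin T → ι} {b : ℕ → ι → α}
    (hupd : OnlyActiveMoves σ b) {r : Fin T} (hr : r ∈ lastActivations σ) {u : ℕ}
    (hru : (r : ℕ) + 1 ≤ u) (huT : u ≤ T) :
    b u (σ r) = b (r + 1) (σ r) :=
  eq_of_not_activated hupd hru huT fun t ht _ => (mem_filter.1 hr).2 t (Fin.lt_def.2 (by omega))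

end Sequences

section TopBid

variable {ι : Type*} [Fintype ι]

noncomputable def topBid (b : ι → ℝ) : ℝ≥0 := univ.sup fun i => (b i).toNNReal

lemma toNNReal_le_topBid (b : ι → ℝ) (i : ι) : (b i).toNNReal ≤ topBid b :=
  le_sup (f := fun i => (b i).toNNReal) (mem_univ i)

lemma topBid_le {b : ι → ℝ} {i : ι} (hi : 0 ≤ b i) (h : ∀ k, b k ≤ b i) :
    (topBid b : ℝ) ≤ b i := by
  rw [← Real.coe_toNNReal _ hi, NNReal.coe_le_coe]
  exact Finset.sup_le fun k _ => Real.toNNReal_le_toNNReal (h k)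

lemma exists_topBid_eq [Nonempty ι] (b : ι → ℝ) : ∃ i, topBid b = (b i).toNNReal :=
  let ⟨i, _, h⟩ := exists_mem_eq_sup univ univ_nonempty fun i => (b i).toNNReal
  ⟨i, h⟩

noncomputable def topBidder [Nonempty ι] (b : ι → ℝ) : ι := (exists_topBid_eq b).choose

lemma topBid_eq_topBidder [Nonempty ι] (b : ι → ℝ) :
    topBid b = (b (topBidder b)).toNNReal :=
  (exists_topBid_eq b).choose_spec

noncomputable def peakBid (b : ℕ → ι → ℝ) (s T : ℕ) : ℝ≥0 := (Icc s T).sup fun t => topBid (b t)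

lemma topBid_le_peakBid (b : ℕ → ι → ℝ) {s t T : ℕ} (hst : s ≤ t) (htT : t ≤ T) :
    topBid (b t) ≤ peakBid b s T :=
  le_sup (f := fun t => topBid (b t)) (mem_Icc.2 ⟨hst, htT⟩)

lemma peakBid_self (b : ℕ → ι → ℝ) (T : ℕ) : peakBid b T T = topBid (b T) := by
  simp [peakBid]

lemma peakBid_eq_max (b : ℕ → ι → ℝ) {s T : ℕ} (hs : s < T) :
    peakBid b s T = max (topBid (b s)) (peakBid b (s + 1) T) := by
  rw [peakBid, ← insert_Icc_add_one_left_eq_Icc hs.le, sup_insert, peakBid]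

end TopBid

section Welfare

variable {n m T : ℕ}

lemma maxOther_le_topBid (b : Fin n → Fin m → ℝ) (i : Fin n) (j : Fin m) :
    maxOther b i j ≤ topBid fun k => b k j :=
  NNReal.coe_le_coe.2 (sup_mono (erase_subset i univ))

lemma toNNReal_le_maxOther (b : Fin n → Fin m → ℝ) {i k : Fin n} (hk : k ≠ i) (j : Fin m) :
    (b k j).toNNReal ≤ maxOther b i j :=
  le_sup (f := fun k => (b k j).toNNReal) (mem_erase.2 ⟨hk, mem_univ k⟩)

lemma sum_topBid_le_mul_sum {β : ℝ} (hβ : 1 ≤ β) {b : Fin n → Fin m → ℝ}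
    {W : Fin n → Finset (Fin m)} (v : Fin n → Finset (Fin m) → ℝ) (hnonneg : ∀ i j, 0 ≤ b i j)
    (hpart : ∀ j, ∃! i, j ∈ W i) (hwin : ∀ i, ∀ j ∈ W i, ∀ k, b k j ≤ b i j)
    (hsafe : ∀ i, ∑ j ∈ W i, (b i j - maxOther b i j)
      ≤ β * (v i (W i) - ∑ j ∈ W i, maxOther b i j)) :
    ∑ j, (topBid fun i => b i j : ℝ) ≤ β * ∑ i, v i (W i) := by
  rw [← sum_sum_of_existsUnique_mem W hpart, mul_sum]
  refine sum_le_sum fun i _ => ?_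
  have hprice : 0 ≤ ∑ j ∈ W i, maxOther b i j := sum_nonneg fun j _ => NNReal.coe_nonneg _
  have hbid := hsafe i
  rw [sum_sub_distrib] at hbid
  calc ∑ j ∈ W i, (topBid fun k => b k j : ℝ) ≤ ∑ j ∈ W i, b i j :=
        sum_le_sum fun j hj => topBid_le (hnonneg i j) (hwin i j hj)
    _ ≤ β * v i (W i) := by nlinarith

lemma sum_lastActivations_le_topBid {σ : Fin T → Fin n} {b : ℕ → Fin n → Fin m → ℝ}
    (hupd : OnlyActiveMoves σ b) (W : ℕ → Fin n → Finset (Fin m)) (j : Fin m) :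
    ∑ t ∈ lastActivations σ, (if j ∈ W (t + 1) (σ t)
        then b (t + 1) (σ t) j - maxOther (b (t + 1)) (σ t) j else 0)
      ≤ topBid fun i => b T i j := by
  set L := lastActivations σ
  -- `F k` is the highest final bid on `j` among bidders whose last activation precedes `k`
  set F : ℕ → ℝ := fun k =>
    ((L.filter fun r : Fin T => (r : ℕ) < k).sup fun r => (b T (σ r) j).toNNReal : ℝ≥0)
  have hmono : ∀ k, F k ≤ F (k + 1) := fun k =>
    NNReal.coe_le_coe.2 (sup_mono (monotone_filter_right _ fun r _ (h : (r : ℕ) < k) => by omega))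
  have hstep : ∀ t : Fin T, (if t ∈ L then (if j ∈ W (t + 1) (σ t)
      then b (t + 1) (σ t) j - maxOther (b (t + 1)) (σ t) j else 0) else 0) ≤ F (t + 1) - F t := by
    intro t
    split_ifs with ht hj
    · have hnew : b (t + 1) (σ t) j ≤ F (t + 1) := by
        rw [← apply_eq_of_mem_lastActivations hupd ht t.isLt le_rfl]
        exact (Real.le_coe_toNNReal _).trans (NNReal.coe_le_coe.2
          (le_sup (f := fun r => (b T (σ r) j).toNNReal) (mem_filter.2 ⟨ht, t.val.lt_succ_self⟩)))
      have hold : F t ≤ maxOther (b (t + 1)) (σ t) j := by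
        refine NNReal.coe_le_coe.2 (Finset.sup_le fun r hr => ?_)
        obtain ⟨hrL, hrt⟩ := mem_filter.1 hr
        rw [apply_eq_of_mem_lastActivations hupd hrL r.isLt le_rfl,
          ← apply_eq_of_mem_lastActivations hupd hrL (by omega) t.isLt]
        exact toNNReal_le_maxOther _ ((mem_filter.1 hrL).2 t (Fin.lt_def.2 hrt)).symm j
      linarith
    all_goals linarith [hmono t]
  have hF0 : F 0 = 0 := by simp [F]
  have hFT : F T ≤ topBid fun i => b T i j :=
    NNReal.coe_le_coe.2 (Finset.sup_le fun r _ => toNNReal_le_topBid (fun i => b T i j) (σ r))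
  calc _ = ∑ t, (if t ∈ L then (if j ∈ W (t + 1) (σ t)
        then b (t + 1) (σ t) j - maxOther (b (t + 1)) (σ t) j else 0) else 0) := by
          rw [sum_ite_mem, univ_inter]
    _ ≤ ∑ t : Fin T, (F (t + 1) - F t) := sum_le_sum fun t _ => hstep t
    _ = F T - F 0 := by rw [Fin.sum_univ_eq_sum_range (fun k => F (k + 1) - F k), sum_range_sub]
    _ ≤ _ := by linarith

theorem mul_sum_activated_le {α : ℝ} (hα : 0 ≤ α) {σ : Fin T → Fin n}
    {b : ℕ → Fin n → Fin m → ℝ} (hupd : OnlyActiveMoves σ b)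
    (v : Fin n → Finset (Fin m) → ℝ) (W : ℕ → Fin n → Finset (Fin m))
    (haggr : ∀ (t : Fin T) (S : Finset (Fin m)),
      α * (v (σ t) S - ∑ j ∈ S, maxOther (b (t + 1)) (σ t) j)
        ≤ ∑ j ∈ W (t + 1) (σ t), (b (t + 1) (σ t) j - maxOther (b (t + 1)) (σ t) j))
    (Sstar : Fin n → Finset (Fin m)) (hstar : ∀ j, ∃! i, j ∈ Sstar i) :
    α * ∑ i ∈ univ.image σ, v i (Sstar i)
      ≤ ∑ j, (topBid fun i => b T i j : ℝ) + α * ∑ j, (peakBid (fun t i => b t i j) 0 T : ℝ) := by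
  set P : Fin m → ℝ := fun j => peakBid (fun t i => b t i j) 0 T
  set u : Fin T → ℝ := fun t =>
    ∑ j ∈ W (t + 1) (σ t), (b (t + 1) (σ t) j - maxOther (b (t + 1)) (σ t) j)
  have hlast : ∀ t ∈ lastActivations σ,
      α * v (σ t) (Sstar (σ t)) ≤ u t + α * ∑ j ∈ Sstar (σ t), P j := by
    intro t _
    have hprice : ∑ j ∈ Sstar (σ t), maxOther (b (t + 1)) (σ t) j ≤ ∑ j ∈ Sstar (σ t), P j :=
      sum_le_sum fun j _ => (maxOther_le_topBid _ _ _).trans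
        (NNReal.coe_le_coe.2 (topBid_le_peakBid (fun t i => b t i j) (Nat.zero_le _) t.isLt))
    nlinarith [haggr t (Sstar (σ t)), mul_le_mul_of_nonneg_left hprice hα]
  have hsurplus : ∑ t ∈ lastActivations σ, u t ≤ ∑ j, (topBid fun i => b T i j : ℝ) := by
    have hind : ∀ t, u t = ∑ j, if j ∈ W (t + 1) (σ t)
        then b (t + 1) (σ t) j - maxOther (b (t + 1)) (σ t) j else 0 :=
      fun t => by rw [sum_ite_mem, univ_inter]
    rw [sum_congr rfl fun t _ => hind t, sum_comm]
    exact sum_le_sum fun j _ => sum_lastActivations_le_topBid hupd W j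
  have hprices : ∑ t ∈ lastActivations σ, ∑ j ∈ Sstar (σ t), P j ≤ ∑ j, P j := by
    rw [← sum_image (f := fun i => ∑ j ∈ Sstar i, P j) (injOn_lastActivations σ),
      image_lastActivations, ← sum_sum_of_existsUnique_mem Sstar hstar]
    exact sum_le_sum_of_subset_of_nonneg (subset_univ _) fun i _ _ =>
      sum_nonneg fun j _ => NNReal.coe_nonneg _
  calc α * ∑ i ∈ univ.image σ, v i (Sstar i)
      = ∑ t ∈ lastActivations σ, α * v (σ t) (Sstar (σ t)) := by
        rw [← image_lastActivations, sum_image (injOn_lastActivations σ), mul_sum]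
    _ ≤ ∑ t ∈ lastActivations σ, (u t + α * ∑ j ∈ Sstar (σ t), P j) := sum_le_sum hlast
    _ ≤ _ := by
        rw [sum_add_distrib, ← mul_sum]
        gcongr

end Welfare

section PeakBid

variable {ι : Type*} [Fintype ι] [DecidableEq ι] [Nonempty ι] {T : ℕ}
  {x : (Fin T → ι) → ℕ → ι → ℝ}

lemma sub_one_pow_mul_topBid_le (hupd : ∀ σ, OnlyActiveMoves σ (x σ)) (hadapted : IsAdapted x)
    {s : ℕ} (hs : s ≤ T) (σ : Fin T → ι) :
    ((Fintype.card ι - 1 : ℕ) : ℝ) ^ (T - s) * topBid (x σ s)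
      ≤ ∑ σ' ∈ cylinder s σ univ, (topBid (x σ' T) : ℝ) := by
  set i := topBidder (x σ s)
  have hfrozen : ∀ σ' ∈ cylinder s σ (univ.erase i),
      (topBid (x σ s) : ℝ) ≤ topBid (x σ' T) := by
    intro σ' hσ'
    rw [mem_cylinder] at hσ'
    have hpre : x σ' s = x σ s := hadapted σ' σ s hs fun t ht => (hσ' t).1 ht
    have hkeep : x σ' T i = x σ' s i := eq_of_not_activated (hupd σ') hs le_rfl
      fun t ht _ => (mem_erase.1 ((hσ' t).2 ht)).1
    calc (topBid (x σ s) : ℝ) = (x σ' T i).toNNReal := by rw [topBid_eq_topBidder, hkeep, hpre]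
      _ ≤ topBid (x σ' T) := NNReal.coe_le_coe.2 (toNNReal_le_topBid _ i)
  have hsub : cylinder s σ (univ.erase i) ⊆ cylinder s σ univ := fun σ' h =>
    mem_cylinder.2 fun t => ⟨(mem_cylinder.1 h t).1, fun _ => mem_univ _⟩
  calc ((Fintype.card ι - 1 : ℕ) : ℝ) ^ (T - s) * topBid (x σ s)
      = ∑ _σ' ∈ cylinder s σ (univ.erase i), (topBid (x σ s) : ℝ) := by
        simp [card_cylinder, card_erase_of_mem]
    _ ≤ ∑ σ' ∈ cylinder s σ (univ.erase i), (topBid (x σ' T) : ℝ) := sum_le_sum hfrozen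
    _ ≤ ∑ σ' ∈ cylinder s σ univ, (topBid (x σ' T) : ℝ) :=
        sum_le_sum_of_subset_of_nonneg hsub fun _ _ _ => NNReal.coe_nonneg _

lemma one_sub_one_div_pow_mul_sum_topBid_le (hupd : ∀ σ, OnlyActiveMoves σ (x σ))
    (hadapted : IsAdapted x) {s : ℕ} (hs : s ≤ T) :
    (1 - 1 / (Fintype.card ι : ℝ)) ^ (T - s) * ∑ σ, (topBid (x σ s) : ℝ)
      ≤ ∑ σ, (topBid (x σ T) : ℝ) := by
  have h := sum_le_sum (s := univ) fun σ _ => sub_one_pow_mul_topBid_le hupd hadapted hs σ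
  rw [← mul_sum, sum_sum_cylinder_univ, natCast_card_sub_one_pow, mul_assoc] at h
  exact le_of_mul_le_mul_left h (by positivity)

lemma peakBid_le_succ (σ : Fin T → ι) (hupd : OnlyActiveMoves σ (x σ)) {s : ℕ} (hs : s < T) :
    (peakBid (x σ) s T : ℝ) ≤ peakBid (x σ) (s + 1) T
      + if σ ⟨s, hs⟩ = topBidder (x σ s) then (topBid (x σ s) : ℝ) else 0 := by
  rw [peakBid_eq_max _ hs, NNReal.coe_max]
  split_ifs with h
  · exact max_le (le_add_of_nonneg_left (NNReal.coe_nonneg _))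
      (le_add_of_nonneg_right (NNReal.coe_nonneg _))
  · have hkeep : topBid (x σ s) ≤ peakBid (x σ) (s + 1) T :=
      calc topBid (x σ s) = (x σ (s + 1) (topBidder (x σ s))).toNNReal := by
            rw [topBid_eq_topBidder, hupd ⟨s, hs⟩ _ (Ne.symm h)]
        _ ≤ topBid (x σ (s + 1)) := toNNReal_le_topBid _ _
        _ ≤ peakBid (x σ) (s + 1) T := topBid_le_peakBid _ le_rfl hs
    rw [add_zero, max_eq_right (by exact_mod_cast hkeep)]

lemma sum_peakBid_le_succ (hupd : ∀ σ, OnlyActiveMoves σ (x σ)) (hadapted : IsAdapted x)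
    {s : ℕ} (hs : s < T) :
    ∑ σ, (peakBid (x σ) s T : ℝ)
      ≤ ∑ σ, (peakBid (x σ) (s + 1) T : ℝ) + (∑ σ, (topBid (x σ s) : ℝ)) / Fintype.card ι := by
  have hprefix : ∀ σ a, x (update σ ⟨s, hs⟩ a) s = x σ s := fun σ a =>
    hadapted _ _ s hs.le fun t ht => update_of_ne (by rintro rfl; exact lt_irrefl _ ht) _ _
  rw [← card_mul_sum_ite_eq ⟨s, hs⟩ (f := fun σ => (topBid (x σ s) : ℝ))
      (g := fun σ => topBidder (x σ s)) (fun σ a => by simp only [hprefix])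
      (fun σ a => by simp only [hprefix]),
    mul_div_cancel_left₀ _ (by positivity), ← sum_add_distrib]
  exact sum_le_sum fun σ _ => peakBid_le_succ σ (hupd σ) hs

theorem one_sub_one_div_pow_mul_sum_peakBid_le (hupd : ∀ σ, OnlyActiveMoves σ (x σ))
    (hadapted : IsAdapted x) :
    (1 - 1 / (Fintype.card ι : ℝ)) ^ T * ∑ σ, (peakBid (x σ) 0 T : ℝ)
      ≤ ∑ σ, (topBid (x σ T) : ℝ) :=
  one_sub_one_div_pow_mul_le_of_le_add (R := fun s => ∑ σ, (peakBid (x σ) s T : ℝ))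
    (S := fun s => ∑ σ, (topBid (x σ s) : ℝ)) (by exact_mod_cast Fintype.card_pos)
    (by simp [peakBid_self]) (fun _ hs => sum_peakBid_le_succ hupd hadapted hs)
    (fun _ hs => one_sub_one_div_pow_mul_sum_topBid_le hupd hadapted hs)

end PeakBid

lemma sum_peakBid_le_four_mul {n : ℕ} (hn : 2 ≤ n) {x : (Fin n → Fin n) → ℕ → Fin n → ℝ}
    (hupd : ∀ σ, OnlyActiveMoves σ (x σ)) (hadapted : IsAdapted x) :
    ∑ σ, (peakBid (x σ) 0 n : ℝ) ≤ 4 * ∑ σ, (topBid (x σ n) : ℝ) := by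
  have : NeZero n := ⟨by omega⟩
  have h := one_sub_one_div_pow_mul_sum_peakBid_le hupd hadapted
  rw [Fintype.card_fin] at h
  have hpeak : 0 ≤ ∑ σ, (peakBid (x σ) 0 n : ℝ) := sum_nonneg fun σ _ => NNReal.coe_nonneg _
  nlinarith [one_div_four_le_one_sub_one_div_pow hn]

theorem stmt16_general (n m : ℕ) (hn : 2 ≤ n) (α β : ℝ) (hα : 0 < α) (hβ : 1 ≤ β)
    (v : Fin n → Finset (Fin m) → ℝ) (hv : ∀ i S, 0 ≤ v i S)
    (B : (Fin n → Fin n) → ℕ → Fin n → Fin m → ℝ)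
    (hnonneg : ∀ σ t i j, 0 ≤ B σ t i j)
    -- only the chosen bidder changes his bid at each step
    (hupd : ∀ (σ : Fin n → Fin n) (t : Fin n) (k : Fin n), k ≠ σ t →
      ∀ j, B σ (t : ℕ) k j = B σ ((t : ℕ) + 1) k j)
    -- the process is adapted: bids at time `t` depend only on the activations before `t`
    (hadapted : ∀ (σ σ' : Fin n → Fin n) (t : ℕ), t ≤ n →
      (∀ s : Fin n, (s : ℕ) < t → σ s = σ' s) → ∀ i j, B σ t i j = B σ' t i j)
    -- `TA σ t i` is the set of items won by bidder `i` at profile `B σ t`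
    (TA : (Fin n → Fin n) → ℕ → Fin n → Finset (Fin m))
    (hpart : ∀ σ t, ∀ j : Fin m, ∃! i : Fin n, j ∈ TA σ t i)
    (hwin : ∀ σ t, ∀ i : Fin n, ∀ j ∈ TA σ t i, ∀ k : Fin n, B σ t k j ≤ B σ t i j)
    -- β-safety at every step
    (hsafe : ∀ σ (t : ℕ), t ≤ n → ∀ i : Fin n,
      ∑ j ∈ TA σ t i, (B σ t i j - maxOther (B σ t) i j)
        ≤ β * (v i (TA σ t i) - ∑ j ∈ TA σ t i, maxOther (B σ t) i j))
    -- each update is α-aggressive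
    (haggr : ∀ σ (t : Fin n), ∀ S : Finset (Fin m),
      α * (v (σ t) S - ∑ j ∈ S, maxOther (B σ ((t : ℕ) + 1)) (σ t) j)
        ≤ ∑ j ∈ TA σ ((t : ℕ) + 1) (σ t),
            (B σ ((t : ℕ) + 1) (σ t) j - maxOther (B σ ((t : ℕ) + 1)) (σ t) j)) :
    ∀ Sstar : Fin n → Finset (Fin m), (∀ j : Fin m, ∃! i : Fin n, j ∈ Sstar i) →
      (α / (2 * (1 + 4 * α) * β)) * ∑ i, v i (Sstar i)
        ≤ (1 / (n : ℝ) ^ n) * ∑ σ : Fin n → Fin n, ∑ i, v i (TA σ n i) := by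
  intro Sstar hstar
  set D : (Fin n → Fin n) → ℝ := fun σ => ∑ j, (topBid fun i => B σ n i j : ℝ)
  set P : (Fin n → Fin n) → ℝ := fun σ => ∑ j, (peakBid (fun t i => B σ t i j) 0 n : ℝ)
  have hactivated : ∀ σ, α * ∑ i ∈ univ.image σ, v i (Sstar i) ≤ D σ + α * P σ := fun σ =>
    mul_sum_activated_le hα.le (fun t k hk => funext (hupd σ t k hk)) v (TA σ) (haggr σ) Sstar hstar
  have hpeak : ∑ σ, P σ ≤ 4 * ∑ σ, D σ := by
    rw [sum_comm, sum_comm (f := fun σ j => (topBid fun i => B σ n i j : ℝ)), mul_sum]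
    exact sum_le_sum fun j _ => sum_peakBid_le_four_mul hn (x := fun σ t i => B σ t i j)
      (fun σ t k hk => hupd σ t k hk j)
      (fun σ σ' t ht h => funext fun i => hadapted σ σ' t ht h i j)
  have hwelfare : ∑ σ, D σ ≤ β * ∑ σ, ∑ i, v i (TA σ n i) := by
    rw [mul_sum]
    exact sum_le_sum fun σ _ => sum_topBid_le_mul_sum hβ v (hnonneg σ n) (hpart σ n) (hwin σ n)
      (hsafe σ n le_rfl)
  have hcover := half_pow_mul_sum_le_sum_sum_image (by omega) fun i => hv i (Sstar i)
  have hsum := sum_le_sum fun σ (_ : σ ∈ univ) => hactivated σ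
  rw [← mul_sum, sum_add_distrib, ← mul_sum] at hsum
  have hn0 : (0 : ℝ) < (n : ℝ) ^ n := by positivity
  rw [div_mul_eq_mul_div, div_le_iff₀ (by positivity), one_div_mul_eq_div, div_mul_eq_mul_div,
    le_div_iff₀ hn0]
  nlinarith

/-- Randomized activation welfare guarantee: with `T = n ≥ 2` steps, at each step a bidder
chosen uniformly at random (`σ : Fin n → Fin n` uniform) updates his bid `α`-aggressively,
the bid process is adapted to `σ` and `β`-safe. Then the expected social welfare of the
final profile is at least `α/(2(1+4α)β)` times the optimal welfare. -/
theorem stmt16 (n m : ℕ) (hn : 2 ≤ n) (α β : ℝ) (hα : 0 < α) (hα1 : α ≤ 1) (hβ : 1 ≤ β)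
    (v : Fin n → Finset (Fin m) → ℝ) (hv : ∀ i S, 0 ≤ v i S)
    (B : (Fin n → Fin n) → ℕ → Fin n → Fin m → ℝ)
    (hnonneg : ∀ σ t i j, 0 ≤ B σ t i j)
    -- only the chosen bidder changes his bid at each step
    (hupd : ∀ (σ : Fin n → Fin n) (t : Fin n) (k : Fin n), k ≠ σ t →
      ∀ j, B σ (t : ℕ) k j = B σ ((t : ℕ) + 1) k j)
    -- the process is adapted: bids at time `t` depend only on the activations before `t`
    (hadapted : ∀ (σ σ' : Fin n → Fin n) (t : ℕ), t ≤ n →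
      (∀ s : Fin n, (s : ℕ) < t → σ s = σ' s) → ∀ i j, B σ t i j = B σ' t i j)
    -- `TA σ t i` is the set of items won by bidder `i` at profile `B σ t`
    (TA : (Fin n → Fin n) → ℕ → Fin n → Finset (Fin m))
    (hpart : ∀ σ t, ∀ j : Fin m, ∃! i : Fin n, j ∈ TA σ t i)
    (hwin : ∀ σ t, ∀ i : Fin n, ∀ j ∈ TA σ t i, ∀ k : Fin n, B σ t k j ≤ B σ t i j)
    -- β-safety at every step
    (hsafe : ∀ σ (t : ℕ), t ≤ n → ∀ i : Fin n,
      ∑ j ∈ TA σ t i, (B σ t i j - maxOther (B σ t) i j)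
        ≤ β * (v i (TA σ t i) - ∑ j ∈ TA σ t i, maxOther (B σ t) i j))
    -- each update is α-aggressive
    (haggr : ∀ σ (t : Fin n), ∀ S : Finset (Fin m),
      α * (v (σ t) S - ∑ j ∈ S, maxOther (B σ ((t : ℕ) + 1)) (σ t) j)
        ≤ ∑ j ∈ TA σ ((t : ℕ) + 1) (σ t),
            (B σ ((t : ℕ) + 1) (σ t) j - maxOther (B σ ((t : ℕ) + 1)) (σ t) j)) :
    ∀ Sstar : Fin n → Finset (Fin m), (∀ j : Fin m, ∃! i : Fin n, j ∈ Sstar i) →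
      (α / (2 * (1 + 4 * α) * β)) * ∑ i, v i (Sstar i)
        ≤ (1 / (n : ℝ) ^ n) * ∑ σ : Fin n → Fin n, ∑ i, v i (TA σ n i) :=
  stmt16_general n m hn α β hα hβ v hv B hnonneg hupd hadapted TA hpart hwin hsafe haggr
end
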